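/- arXiv:2512.15189 — 7 statements merged into one kernel-verified Lean document; each statement's English description precedes it below -/
import Mathlib

section
/- (Strongly convex per-iteration contraction.) Let ι be a finite nonempty index type with a distinguished element i₀, and let ŵ : ι → ℝ satisfy ŵ_j ≥ 0 for all j and Σ_j ŵ_j = 1. Let γ > 0 and β ≥ 0 with γ·β ≤ ŵ_{i₀}. Let f, h, m : ℝ^d → ℝ with m and h convex, set φ := f + h, fix x̄ ∈ ℝ^d, and assume m(y) ≤ f(y) ≤ m(y) + (β/2)‖y − x̄‖² for all y. Assume moreover that φ is θ-strongly convex with θ > 0. Let z : ι → ℝ^d with z_{i₀} = x̄, and let x* : ι → ℝ^d. Suppose x⁺, g⁺ ∈ ℝ^d satisfy: g⁺ is a subgradient of m + h at x⁺ and x⁺ = Σ_j ŵ_j z_j − γ g⁺. Suppose g* ∈ ℝ^d is a subgradient of φ at x*_{i₀} and x*_{i₀} = Σ_j ŵ_j x*_j − γ g*. Then ‖x⁺ − x*_{i₀}‖² ≤ (1/(1 + γθ)) · Σ_j ŵ_j ‖z_j − x*_j‖². -/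
/-!
Write `e = xp - xstar i₀` and `u j = z j - xstar j`; the two fixed-point equations give
`e = ∑ w j • u j - γ • (gp - gs)`. Strong convexity of `φ` and the sandwich
`m ≤ f ≤ m + β / 2 * ‖· - xb‖ ^ 2` make `gp - gs` strongly monotone up to an error:
`⟪e, gp - gs⟫ ≥ θ / 2 * ‖e‖ ^ 2 - β / 2 * ‖xp - xb‖ ^ 2`. Polarization bounds
`2 * ∑ w j * ⟪e, u j⟫` by `‖e‖ ^ 2 + ∑ w j * ‖u j‖ ^ 2 - w i₀ * ‖xp - xb‖ ^ 2`, because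
`e - u i₀ = xp - xb`, and `γ * β ≤ w i₀` lets this last term absorb the model error.
-/

open scoped RealInnerProductSpace

section

variable {E : Type*} [NormedAddCommGroup E] [InnerProductSpace ℝ E]

open Filter Topology in
/-- Testing the subgradient inequality at `(1 - a) • x + a • y` and letting `a → 0⁺` upgrades it
by the strong convexity modulus. -/
lemma StrongConvexOn.add_inner_add_half_mul_norm_sq_le {s : Set E} {m : ℝ} {f : E → ℝ}
    (hf : StrongConvexOn s m f) {x y g : E} (hx : x ∈ s) (hy : y ∈ s)
    (hg : ∀ z ∈ s, f x + ⟪g, z - x⟫ ≤ f z) :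
    f x + ⟪g, y - x⟫ + m / 2 * ‖y - x‖ ^ 2 ≤ f y := by
  have along_segment : ∀ a ∈ Set.Ioo (0 : ℝ) 1,
      ⟪g, y - x⟫ + (1 - a) * (m / 2 * ‖y - x‖ ^ 2) ≤ f y - f x := by
    rintro a ⟨ha0, ha1⟩
    have hconv := hf.2 hx hy (sub_nonneg.2 ha1.le) ha0.le (sub_add_cancel 1 a)
    have hsub := hg _ (hf.1 hx hy (sub_nonneg.2 ha1.le) ha0.le (sub_add_cancel 1 a))
    have hdir : (1 - a) • x + a • y - x = a • (y - x) := by module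
    rw [hdir, real_inner_smul_right] at hsub
    rw [smul_eq_mul, smul_eq_mul, norm_sub_rev] at hconv
    refine le_of_mul_le_mul_left ?_ ha0
    nlinarith
  have hlim : Tendsto (fun a : ℝ => ⟪g, y - x⟫ + (1 - a) * (m / 2 * ‖y - x‖ ^ 2)) (𝓝[>] 0)
      (𝓝 (⟪g, y - x⟫ + (1 - 0) * (m / 2 * ‖y - x‖ ^ 2))) :=
    (Continuous.tendsto (by fun_prop) 0).mono_left nhdsWithin_le_nhds
  have := le_of_tendsto hlim (eventually_of_mem (Ioo_mem_nhdsGT one_pos) along_segment)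
  linarith

lemma inner_sub_subgradient_ge_of_lower_model {f h m : E → ℝ} {β θ : ℝ} {xb xp xs gp gs : E}
    (hmf : ∀ y, m y ≤ f y) (hfm : ∀ y, f y ≤ m y + β / 2 * ‖y - xb‖ ^ 2)
    (hgp : ∀ y, m xp + h xp + ⟪gp, y - xp⟫ ≤ m y + h y)
    (hgs : f xs + h xs + ⟪gs, xp - xs⟫ + θ / 2 * ‖xp - xs‖ ^ 2 ≤ f xp + h xp) :
    θ / 2 * ‖xp - xs‖ ^ 2 - β / 2 * ‖xp - xb‖ ^ 2 ≤ ⟪xp - xs, gp - gs⟫ := by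
  have hgp' := hgp xs
  rw [← neg_sub, inner_neg_right] at hgp'
  rw [inner_sub_right, real_inner_comm, real_inner_comm gs]
  linarith [hmf xs, hfm xp]

lemma two_mul_sum_inner_le {ι : Type*} [Fintype ι] {w : ι → ℝ} (hw : ∀ j, 0 ≤ w j)
    (hw1 : ∑ j, w j = 1) (e : E) (u : ι → E) (i₀ : ι) :
    2 * ∑ j, w j * ⟪e, u j⟫ ≤ ‖e‖ ^ 2 + ∑ j, w j * ‖u j‖ ^ 2 - w i₀ * ‖e - u i₀‖ ^ 2 := by
  have hpolar : 2 * ∑ j, w j * ⟪e, u j⟫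
      = ‖e‖ ^ 2 + ∑ j, w j * ‖u j‖ ^ 2 - ∑ j, w j * ‖e - u j‖ ^ 2 := by
    simp only [norm_sub_sq_real, mul_sub, mul_add, Finset.sum_add_distrib, Finset.sum_sub_distrib,
      ← Finset.sum_mul, hw1, Finset.mul_sum]
    ring_nf
  have hsingle : w i₀ * ‖e - u i₀‖ ^ 2 ≤ ∑ j, w j * ‖e - u j‖ ^ 2 :=
    Finset.single_le_sum (f := fun j => w j * ‖e - u j‖ ^ 2)
      (fun j _ => mul_nonneg (hw j) (sq_nonneg _)) (Finset.mem_univ i₀)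
  linarith

end

theorem stmt_5_general {d : ℕ}
    {ι : Type*} [Fintype ι] (i₀ : ι)
    (w : ι → ℝ) (hw : ∀ j, 0 ≤ w j) (hw1 : ∑ j, w j = 1)
    (γ β : ℝ) (hγ : 0 < γ) (hγβ : γ * β ≤ w i₀)
    (f h m : EuclideanSpace ℝ (Fin d) → ℝ)
    (φ : EuclideanSpace ℝ (Fin d) → ℝ) (hφ : ∀ y, φ y = f y + h y)
    (xb : EuclideanSpace ℝ (Fin d))
    (hsand₁ : ∀ y, m y ≤ f y)
    (hsand₂ : ∀ y, f y ≤ m y + β / 2 * ‖y - xb‖ ^ 2)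
    (θ : ℝ) (hθ : 0 < θ)
    (hsc : ConvexOn ℝ Set.univ (fun x => φ x - θ / 2 * ‖x‖ ^ 2))
    (z : ι → EuclideanSpace ℝ (Fin d)) (hz : z i₀ = xb)
    (xstar : ι → EuclideanSpace ℝ (Fin d))
    (xp gp : EuclideanSpace ℝ (Fin d))
    (hgp : ∀ y, m y + h y ≥ m xp + h xp + ⟪gp, y - xp⟫)
    (hxp : xp = ∑ j, w j • z j - γ • gp)
    (gs : EuclideanSpace ℝ (Fin d))
    (hgs : ∀ y, φ y ≥ φ (xstar i₀) + ⟪gs, y - xstar i₀⟫)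
    (hxs : xstar i₀ = ∑ j, w j • xstar j - γ • gs) :
    ‖xp - xstar i₀‖ ^ 2 ≤ (1 / (1 + γ * θ)) * ∑ j, w j * ‖z j - xstar j‖ ^ 2 := by
  set e := xp - xstar i₀
  have hstrong := (strongConvexOn_iff_convex.2 hsc).add_inner_add_half_mul_norm_sq_le
    (Set.mem_univ _) (Set.mem_univ xp) (fun y _ => hgs y)
  simp only [hφ] at hstrong
  have hmono := inner_sub_subgradient_ge_of_lower_model hsand₁ hsand₂ hgp hstrong
  have he : e = ∑ j, w j • (z j - xstar j) - γ • (gp - gs) := by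
    simp only [e, hxp, hxs, smul_sub, Finset.sum_sub_distrib]
    abel
  have hexpand : ‖e‖ ^ 2 = ∑ j, w j * ⟪e, z j - xstar j⟫ - γ * ⟪e, gp - gs⟫ := by
    calc ‖e‖ ^ 2 = ⟪e, ∑ j, w j • (z j - xstar j) - γ • (gp - gs)⟫ := by
          rw [← he, real_inner_self_eq_norm_sq]
      _ = _ := by simp only [inner_sub_right, inner_sum, real_inner_smul_right]
  have hyoung := two_mul_sum_inner_le hw hw1 e (fun j => z j - xstar j) i₀
  have hlast : e - (z i₀ - xstar i₀) = xp - xb := by simp only [e, hz]; abel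
  rw [hlast] at hyoung
  rw [one_div_mul_eq_div, le_div_iff₀ (by positivity)]
  nlinarith [mul_le_mul_of_nonneg_left hmono hγ.le,
    mul_nonneg (sub_nonneg.2 hγβ) (sq_nonneg ‖xp - xb‖)]

/-- Strongly convex per-iteration contraction of asynchronous DPBM. -/
theorem stmt_5 {d : ℕ} (hd : 1 ≤ d)
    {ι : Type*} [Fintype ι] [Nonempty ι] (i₀ : ι)
    (w : ι → ℝ) (hw : ∀ j, 0 ≤ w j) (hw1 : ∑ j, w j = 1)
    (γ β : ℝ) (hγ : 0 < γ) (hβ : 0 ≤ β) (hγβ : γ * β ≤ w i₀)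
    (f h m : EuclideanSpace ℝ (Fin d) → ℝ)
    (hmconv : ConvexOn ℝ Set.univ m) (hhconv : ConvexOn ℝ Set.univ h)
    (φ : EuclideanSpace ℝ (Fin d) → ℝ) (hφ : ∀ y, φ y = f y + h y)
    (xb : EuclideanSpace ℝ (Fin d))
    (hsand₁ : ∀ y, m y ≤ f y)
    (hsand₂ : ∀ y, f y ≤ m y + β / 2 * ‖y - xb‖ ^ 2)
    (θ : ℝ) (hθ : 0 < θ)
    (hsc : ConvexOn ℝ Set.univ (fun x => φ x - θ / 2 * ‖x‖ ^ 2))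
    (z : ι → EuclideanSpace ℝ (Fin d)) (hz : z i₀ = xb)
    (xstar : ι → EuclideanSpace ℝ (Fin d))
    (xp gp : EuclideanSpace ℝ (Fin d))
    (hgp : ∀ y, m y + h y ≥ m xp + h xp + ⟪gp, y - xp⟫)
    (hxp : xp = ∑ j, w j • z j - γ • gp)
    (gs : EuclideanSpace ℝ (Fin d))
    (hgs : ∀ y, φ y ≥ φ (xstar i₀) + ⟪gs, y - xstar i₀⟫)
    (hxs : xstar i₀ = ∑ j, w j • xstar j - γ • gs) :
    ‖xp - xstar i₀‖ ^ 2 ≤ (1 / (1 + γ * θ)) * ∑ j, w j * ‖z j - xstar j‖ ^ 2 :=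
  stmt_5_general i₀ w hw hw1 γ β hγ hγβ f h m φ hφ xb hsand₁ hsand₂ θ hθ hsc z hz xstar xp gp hgp
    hxp gs hgs hxs
end

section
/- (Theorem 1, part 1, linear rate.) Consider the asynchronous DPBM setup under partial asynchrony with parameters B, D ∈ ℕ, and assume in addition that each φ_i := f_i + h_i is θ_i-strongly convex with θ_i > 0. Set ρ := 1/(1 + min_i γ_i θ_i). Then ρ ∈ (0,1) and for every node i and every k ∈ ℕ, ‖x_i^k − x*_i‖² ≤ ρ^{⌊k/(B+D+1)⌋} · max_j ‖x_j^0 − x*_j‖². -/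
open scoped RealInnerProductSpace

set_option maxHeartbeats 2000000


section helpers
variable {E : Type*} [NormedAddCommGroup E] [InnerProductSpace ℝ E]

lemma affine_convexOn (w : E) (c : ℝ) : ConvexOn ℝ Set.univ (fun z : E => ⟪w, z⟫ + c) := by
  refine ⟨convex_univ, ?_⟩
  intro p _ q _ a b ha hb hab
  simp only [smul_eq_mul, inner_add_right, real_inner_smul_right]
  apply le_of_eq
  linear_combination (-c) * hab

lemma comb_norm (p z : E) (t : ℝ) :
    ‖(1 - t) • p + t • z‖ ^ 2 = (1 - t) * ‖p‖ ^ 2 + t * ‖z‖ ^ 2 - t * (1 - t) * ‖p - z‖ ^ 2 := by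
  simp only [← real_inner_self_eq_norm_sq, inner_add_left, inner_add_right, inner_sub_left,
    inner_sub_right, real_inner_smul_left, real_inner_smul_right]
  rw [real_inner_comm z p]
  ring

lemma quad_growth {g : E → ℝ} {c : ℝ} (hc : 0 ≤ c)
    (hcvx : ConvexOn ℝ Set.univ (fun z => g z - c / 2 * ‖z‖ ^ 2))
    {p : E} (hmin : ∀ z, g p ≤ g z) (z : E) :
    g p + c / 2 * ‖z - p‖ ^ 2 ≤ g z := by
  have key : ∀ t : ℝ, 0 < t → t < 1 → g p + c / 2 * ((1 - t) * ‖p - z‖ ^ 2) ≤ g z := by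
    intro t ht ht1
    have hcomb := hcvx.2 (Set.mem_univ p) (Set.mem_univ z) (by linarith : (0:ℝ) ≤ 1 - t)
      (le_of_lt ht) (by ring)
    simp only [smul_eq_mul] at hcomb
    have hmin' := hmin ((1 - t) • p + t • z)
    rw [comb_norm] at hcomb
    nlinarith [hcomb, hmin']
  have hQ : (0:ℝ) ≤ ‖p - z‖ ^ 2 := by positivity
  rw [norm_sub_rev z p]
  refine le_of_forall_pos_le_add ?_
  intro ε hε
  set Q := ‖p - z‖ ^ 2 with hQD
  have hden : (0:ℝ) < c / 2 * Q + 1 := by positivity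
  set t : ℝ := min (1/2) (ε / (c / 2 * Q + 1)) with htD
  have ht0 : 0 < t := lt_min (by norm_num) (by positivity)
  have ht1 : t < 1 := lt_of_le_of_lt (min_le_left _ _) (by norm_num)
  have hk := key t ht0 ht1
  have htle : t * (c / 2 * Q) ≤ ε := by
    have h1 : t ≤ ε / (c / 2 * Q + 1) := min_le_right _ _
    have h2 : t * (c / 2 * Q) ≤ (ε / (c / 2 * Q + 1)) * (c / 2 * Q) := by
      apply mul_le_mul_of_nonneg_right h1; positivity
    have h3 : (ε / (c / 2 * Q + 1)) * (c / 2 * Q) ≤ ε := by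
      rw [div_mul_eq_mul_div, div_le_iff₀ hden]
      nlinarith
    linarith
  nlinarith [hk]

lemma per_term (u p a q r : E) (M : ℝ) (hM : ‖q - r‖ ^ 2 ≤ M) :
    ⟪a - q, p - u⟫ + (‖u - r‖ ^ 2 - ‖p - r‖ ^ 2) / 2
      ≤ (‖u - p‖ ^ 2 + M + ‖u - a‖ ^ 2 - ‖a - p‖ ^ 2) / 2 := by
  have h1 : (0:ℝ) ≤ ‖(u - p) - (q - r)‖ ^ 2 := by positivity
  simp only [← real_inner_self_eq_norm_sq, inner_sub_left, inner_sub_right] at *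
  linarith [real_inner_comm u p, real_inner_comm u q, real_inner_comm u r, real_inner_comm u a,
    real_inner_comm p q, real_inner_comm p r, real_inner_comm p a, real_inner_comm q r,
    real_inner_comm q a, real_inner_comm r a, hM, h1]

end helpers

/-- Theorem 1, part 1 (linear rate): asynchronous DPBM under partial asynchrony
with strongly convex local objectives converges linearly.
The `n + 1` nodes are indexed by `Fin (n + 1)` (so there is at least one node). -/
theorem stmt_6 {d n : ℕ} (hd : 1 ≤ d)
    -- averaging matrix
    (W : Matrix (Fin (n + 1)) (Fin (n + 1)) ℝ)
    (hWsymm : W.IsSymm)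
    (hWnonneg : ∀ i j, 0 ≤ W i j)
    (hWrow : ∀ i, ∑ j, W i j = 1)
    (hWdiag : ∀ i, 0 < W i i)
    (hconn : (SimpleGraph.fromRel (fun i j : Fin (n + 1) => 0 < W i j)).Connected)
    -- local objective functions
    (f h : Fin (n + 1) → EuclideanSpace ℝ (Fin d) → ℝ)
    (hfconv : ∀ i, ConvexOn ℝ Set.univ (f i))
    (hfdiff : ∀ i, Differentiable ℝ (f i))
    (hhconv : ∀ i, ConvexOn ℝ Set.univ (h i))
    -- penalized objective and its minimizer
    (α : ℝ) (hα : 0 < α)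
    (Φ : (Fin (n + 1) → EuclideanSpace ℝ (Fin d)) → ℝ)
    (hΦ : ∀ x, Φ x = (∑ i, (f i (x i) + h i (x i)))
        + (1 / (4 * α)) * ∑ i, ∑ j, W i j * ‖x i - x j‖ ^ 2)
    (xstar : Fin (n + 1) → EuclideanSpace ℝ (Fin d))
    (hxstar : ∀ y, Φ xstar ≤ Φ y)
    -- update times and delayed indices
    (K : Fin (n + 1) → Set ℕ)
    (s : Fin (n + 1) → Fin (n + 1) → ℕ → ℕ)
    (hsii : ∀ i, ∀ k ∈ K i, s i i k = k)
    (hsle : ∀ i j, ∀ k ∈ K i, s i j k ≤ k)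
    -- iterates and models
    (x : ℕ → Fin (n + 1) → EuclideanSpace ℝ (Fin d))
    (β : Fin (n + 1) → ℝ) (hβ : ∀ i, 0 ≤ β i)
    (m : Fin (n + 1) → ℕ → EuclideanSpace ℝ (Fin d) → ℝ)
    (hmconv : ∀ i, ∀ k ∈ K i, ConvexOn ℝ Set.univ (m i k))
    (hmle : ∀ i, ∀ k ∈ K i, ∀ y, m i k y ≤ f i y)
    (hmge : ∀ i, ∀ k ∈ K i, ∀ y, f i y ≤ m i k y + β i / 2 * ‖y - x k i‖ ^ 2)
    -- step-sizes
    (γ : Fin (n + 1) → ℝ)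
    (hγpos : ∀ i, 0 < γ i)
    (hγlt : ∀ i, γ i < 1 / (β i + (1 - W i i) / α))
    -- the algorithm update
    (hupdate : ∀ i, ∀ k ∈ K i, ∀ z,
      m i k (x (k + 1) i) + h i (x (k + 1) i)
          + ‖x (k + 1) i - x k i‖ ^ 2 / (2 * γ i)
          + (1 / α) * ⟪∑ j, W i j • (x k i - x (s i j k) j), x (k + 1) i⟫
        ≤ m i k z + h i z + ‖z - x k i‖ ^ 2 / (2 * γ i)
          + (1 / α) * ⟪∑ j, W i j • (x k i - x (s i j k) j), z⟫)
    (hnoupdate : ∀ i, ∀ k, k ∉ K i → x (k + 1) i = x k i)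
    -- partial asynchrony
    (B D : ℕ)
    (hB : ∀ i, ∀ k : ℕ, ∃ l ∈ K i, k ≤ l ∧ l ≤ k + B)
    (hD : ∀ i j, ∀ k ∈ K i, k - D ≤ s i j k)
    -- strong convexity
    (θ : Fin (n + 1) → ℝ) (hθ : ∀ i, 0 < θ i)
    (hsc : ∀ i, ConvexOn ℝ Set.univ
      (fun z => f i z + h i z - θ i / 2 * ‖z‖ ^ 2))
    -- the contraction factor
    (ρ : ℝ)
    (hρ : ρ = 1 / (1 + Finset.univ.inf' Finset.univ_nonempty
      (fun i => γ i * θ i))) :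
    ρ ∈ Set.Ioo (0 : ℝ) 1 ∧
    ∀ i k, ‖x k i - xstar i‖ ^ 2 ≤
      ρ ^ (k / (B + D + 1)) *
        Finset.univ.sup' Finset.univ_nonempty
          (fun j => ‖x 0 j - xstar j‖ ^ 2) := by
  classical
  have gopt : ∀ (i : Fin (n + 1)) (z : EuclideanSpace ℝ (Fin d)),
      f i (xstar i) + h i (xstar i) + (2 * α)⁻¹ *
          ∑ b ∈ Finset.univ.erase i, W i b * ‖xstar i - xstar b‖ ^ 2
        ≤ f i z + h i z + (2 * α)⁻¹ *
          ∑ b ∈ Finset.univ.erase i, W i b * ‖z - xstar b‖ ^ 2 := by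
    intro i z
    classical
    set A := Finset.univ.erase i with hA
    have split : ∀ v : EuclideanSpace ℝ (Fin d),
        (∑ a, ∑ b, W a b * ‖Function.update xstar i v a - Function.update xstar i v b‖ ^ 2)
          = 2 * ∑ b ∈ A, W i b * ‖v - xstar b‖ ^ 2
            + ∑ a ∈ A, ∑ b ∈ A, W a b * ‖xstar a - xstar b‖ ^ 2 := by
      intro v
      set y := Function.update xstar i v with hyD
      have hyi : y i = v := by rw [hyD]; simp
      have hyb : ∀ b, b ∈ A → y b = xstar b := by
        intro b hb
        rw [hyD]
        exact Function.update_of_ne (Finset.ne_of_mem_erase hb) _ _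
      have inner1 : (∑ b, W i b * ‖y i - y b‖ ^ 2) = ∑ b ∈ A, W i b * ‖v - xstar b‖ ^ 2 := by
        rw [← Finset.add_sum_erase _ _ (Finset.mem_univ i), ← hA, hyi, sub_self, norm_zero]
        rw [show (0:ℝ) ^ 2 = 0 by norm_num, mul_zero, zero_add]
        exact Finset.sum_congr rfl fun b hb => by rw [hyb b hb]
      have inner2 : ∀ a, a ∈ A → (∑ b, W a b * ‖y a - y b‖ ^ 2)
          = W a i * ‖xstar a - v‖ ^ 2 + ∑ b ∈ A, W a b * ‖xstar a - xstar b‖ ^ 2 := by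
        intro a ha
        rw [← Finset.add_sum_erase _ _ (Finset.mem_univ i), ← hA, hyi, hyb a ha]
        congr 1
        exact Finset.sum_congr rfl fun b hb => by rw [hyb b hb]
      rw [← Finset.add_sum_erase _ _ (Finset.mem_univ i), ← hA, inner1,
        Finset.sum_congr rfl inner2, Finset.sum_add_distrib]
      have sym : ∑ a ∈ A, W a i * ‖xstar a - v‖ ^ 2 = ∑ a ∈ A, W i a * ‖v - xstar a‖ ^ 2 :=
        Finset.sum_congr rfl fun a _ => by rw [hWsymm.apply, norm_sub_rev]
      rw [sym]
      ring
    have hupd_self : Function.update xstar i (xstar i) = xstar := Function.update_eq_self i xstar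
    have sum1 : ∀ v : EuclideanSpace ℝ (Fin d),
        (∑ a, (f a ((Function.update xstar i v) a) + h a ((Function.update xstar i v) a)))
          = (f i v + h i v) + ∑ a ∈ A, (f a (xstar a) + h a (xstar a)) := by
      intro v
      rw [← Finset.add_sum_erase _ _ (Finset.mem_univ i), ← hA, Function.update_self]
      congr 1
      exact Finset.sum_congr rfl fun b hb => by
        rw [Function.update_of_ne (Finset.ne_of_mem_erase hb)]
    have hy := hxstar (Function.update xstar i z)
    rw [hΦ, hΦ] at hy
    rw [split z, sum1 z] at hy
    rw [← hupd_self] at hy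
    rw [split (xstar i), sum1 (xstar i), hupd_self] at hy
    have harr : ∀ S DD : ℝ, 1 / (4 * α) * (2 * S + DD) = (2 * α)⁻¹ * S + 1 / (4 * α) * DD := by
      intro S DD
      field_simp
      ring
    rw [harr, harr] at hy
    linarith
  have step : ∀ i, ∀ k ∈ K i, ∀ M : ℝ, ‖x k i - xstar i‖ ^ 2 ≤ M →
      (∀ j, ‖x (s i j k) j - xstar j‖ ^ 2 ≤ M) →
      (1 + γ i * θ i) * ‖x (k + 1) i - xstar i‖ ^ 2 ≤ M := by
    intro i k hk M hM1 hM2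
    classical
    set A := Finset.univ.erase i with hA
    set p := xstar i with hp
    set a := x k i with ha
    set u := x (k + 1) i with hu
    set v := ∑ j, W i j • (x k i - x (s i j k) j) with hv
    -- basic constants
    have hWii1 : W i i ≤ 1 := by
      have h1 := hWrow i
      have h2 : W i i ≤ ∑ j, W i j :=
        Finset.single_le_sum (fun j _ => hWnonneg i j) (Finset.mem_univ i)
      linarith
    have hσ0 : 0 ≤ (1 - W i i) / α := div_nonneg (by linarith) hα.le
    have hγβσ : γ i * (β i + (1 - W i i) / α) < 1 := by
      rcases eq_or_lt_of_le (add_nonneg (hβ i) hσ0) with heq | hlt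
      · exfalso
        have h1 := hγlt i
        rw [← heq] at h1
        simp at h1
        linarith [hγpos i]
      · have h1 := hγlt i
        rw [lt_div_iff₀ hlt] at h1
        linarith
    have hsumA : ∑ b ∈ A, W i b = 1 - W i i := by
      rw [hA, Finset.sum_erase_eq_sub (Finset.mem_univ i), hWrow i]
    -- (I) prox inequality from the update rule
    have hFconv : ConvexOn ℝ Set.univ (fun z : EuclideanSpace ℝ (Fin d) =>
        (m i k z + h i z + ‖z - a‖ ^ 2 / (2 * γ i) + (1 / α) * ⟪v, z⟫)
          - (1 / γ i) / 2 * ‖z‖ ^ 2) := by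
      have haff := affine_convexOn ((1 / α) • v - (1 / γ i) • a) (‖a‖ ^ 2 / (2 * γ i))
      have hsum := ((hmconv i k hk).add (hhconv i)).add haff
      have heq : (fun z : EuclideanSpace ℝ (Fin d) =>
          (m i k z + h i z + ‖z - a‖ ^ 2 / (2 * γ i) + (1 / α) * ⟪v, z⟫)
            - (1 / γ i) / 2 * ‖z‖ ^ 2)
          = (m i k + h i + fun z => ⟪(1 / α) • v - (1 / γ i) • a, z⟫ + ‖a‖ ^ 2 / (2 * γ i)) := by
        funext z
        simp only [Pi.add_apply, inner_sub_left, real_inner_smul_left]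
        rw [norm_sub_sq_real, real_inner_comm a z]
        have hγ0 : γ i ≠ 0 := (hγpos i).ne'
        field_simp
        ring
      rw [heq]
      exact hsum
    have hF := quad_growth (c := 1 / γ i) (by have := hγpos i; positivity) hFconv
      (fun z => hupdate i k hk z) p
    -- (II) quadratic growth of the strongly convex local surrogate at xstar
    have hGconv : ConvexOn ℝ Set.univ (fun z : EuclideanSpace ℝ (Fin d) =>
        (f i z + h i z + (2 * α)⁻¹ * ∑ b ∈ A, W i b * ‖z - xstar b‖ ^ 2)
          - (θ i + (1 - W i i) / α) / 2 * ‖z‖ ^ 2) := by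
      have haff := affine_convexOn (-(α⁻¹) • (∑ b ∈ A, W i b • xstar b))
        ((2 * α)⁻¹ * ∑ b ∈ A, W i b * ‖xstar b‖ ^ 2)
      have hsum := (hsc i).add haff
      have heq : (fun z : EuclideanSpace ℝ (Fin d) =>
          (f i z + h i z + (2 * α)⁻¹ * ∑ b ∈ A, W i b * ‖z - xstar b‖ ^ 2)
            - (θ i + (1 - W i i) / α) / 2 * ‖z‖ ^ 2)
          = ((fun z => f i z + h i z - θ i / 2 * ‖z‖ ^ 2)
              + fun z => ⟪-(α⁻¹) • (∑ b ∈ A, W i b • xstar b), z⟫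
                + (2 * α)⁻¹ * ∑ b ∈ A, W i b * ‖xstar b‖ ^ 2) := by
        funext z
        simp only [Pi.add_apply]
        have hsumexp : ∑ b ∈ A, W i b * ‖z - xstar b‖ ^ 2
            = (1 - W i i) * ‖z‖ ^ 2 - 2 * ∑ b ∈ A, W i b * ⟪xstar b, z⟫
              + ∑ b ∈ A, W i b * ‖xstar b‖ ^ 2 := by
          calc ∑ b ∈ A, W i b * ‖z - xstar b‖ ^ 2
              = ∑ b ∈ A, (W i b * ‖z‖ ^ 2 - 2 * (W i b * ⟪xstar b, z⟫)
                  + W i b * ‖xstar b‖ ^ 2) := by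
                refine Finset.sum_congr rfl fun b _ => ?_
                rw [norm_sub_sq_real, real_inner_comm z (xstar b)]
                ring
            _ = (∑ b ∈ A, W i b) * ‖z‖ ^ 2 - 2 * ∑ b ∈ A, W i b * ⟪xstar b, z⟫
                  + ∑ b ∈ A, W i b * ‖xstar b‖ ^ 2 := by
                rw [Finset.sum_add_distrib, Finset.sum_sub_distrib, ← Finset.sum_mul,
                  ← Finset.mul_sum]
            _ = _ := by rw [hsumA]
        have hw1 : ⟪-(α⁻¹) • (∑ b ∈ A, W i b • xstar b), z⟫
            = -(α⁻¹) * ∑ b ∈ A, W i b * ⟪xstar b, z⟫ := by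
          rw [real_inner_smul_left, sum_inner]
          congr 1
          exact Finset.sum_congr rfl fun b _ => real_inner_smul_left _ _ _
        rw [hsumexp, hw1]
        have hα0 : α ≠ 0 := hα.ne'
        field_simp
        ring
      rw [heq]
      exact hsum
    have hG := quad_growth (c := θ i + (1 - W i i) / α)
      (by have := hθ i; linarith) hGconv (fun z => gopt i z) u
    -- (III) model inequalities
    have hm1 : m i k p ≤ f i p := hmle i k hk p
    have hm2 : f i u ≤ m i k u + β i / 2 * ‖u - a‖ ^ 2 := hmge i k hk u
    -- (IV) network term bound
    set Su := ∑ b ∈ A, W i b * ‖u - xstar b‖ ^ 2 with hSu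
    set Sp := ∑ b ∈ A, W i b * ‖p - xstar b‖ ^ 2 with hSp
    set IP := ∑ j ∈ A, W i j * ⟪a - x (s i j k) j, p - u⟫ with hIP
    set C := ‖u - p‖ ^ 2 + M + ‖u - a‖ ^ 2 - ‖a - p‖ ^ 2 with hC
    have hvpu : ⟪v, p⟫ - ⟪v, u⟫ = IP := by
      rw [← inner_sub_right, hv, sum_inner, hIP,
        ← Finset.add_sum_erase _ _ (Finset.mem_univ i), ← hA]
      rw [hsii i k hk, ← ha, sub_self, smul_zero, inner_zero_left, zero_add]
      exact Finset.sum_congr rfl fun j _ => real_inner_smul_left _ _ _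
    have hNsum : IP + (Su - Sp) / 2 ≤ (1 - W i i) * (C / 2) := by
      have hterm : ∀ j ∈ A, W i j * ⟪a - x (s i j k) j, p - u⟫
          + ((W i j * ‖u - xstar j‖ ^ 2 - W i j * ‖p - xstar j‖ ^ 2) / 2)
          ≤ W i j * (C / 2) := by
        intro j _
        have hpt := per_term u p a (x (s i j k) j) (xstar j) M (hM2 j)
        have := mul_le_mul_of_nonneg_left hpt (hWnonneg i j)
        rw [hC]
        nlinarith [this]
      have hsum := Finset.sum_le_sum hterm
      rw [Finset.sum_add_distrib, ← hIP, ← Finset.sum_mul, hsumA] at hsum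
      have : ∑ j ∈ A, (W i j * ‖u - xstar j‖ ^ 2 - W i j * ‖p - xstar j‖ ^ 2) / 2
          = (Su - Sp) / 2 := by
        rw [hSu, hSp, ← Finset.sum_div, Finset.sum_sub_distrib]
      rw [this] at hsum
      exact hsum
    -- (V) final assembly
    have hγ0 : (0:ℝ) < γ i := hγpos i
    have hα0 : α ≠ 0 := hα.ne'
    have hIP2 : 1 / α * (IP + (Su - Sp) / 2)
        = (1 / α * ⟪v, p⟫ - 1 / α * ⟪v, u⟫) + ((2 * α)⁻¹ * Su - (2 * α)⁻¹ * Sp) := by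
      rw [← hvpu]
      field_simp
    have hNα := mul_le_mul_of_nonneg_left hNsum (by positivity : (0:ℝ) ≤ 1 / α)
    rw [hIP2] at hNα
    have hσC : 1 / α * ((1 - W i i) * (C / 2)) = (1 - W i i) / α / 2 * C := by
      field_simp
    rw [hσC] at hNα
    -- rewrite hF, hG pieces
    have hnrm1 : ‖p - u‖ ^ 2 = ‖u - p‖ ^ 2 := by rw [norm_sub_rev]
    have hnrm2 : ‖p - a‖ ^ 2 = ‖a - p‖ ^ 2 := by rw [norm_sub_rev]
    rw [hnrm1, hnrm2] at hF
    -- now combine everything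
    have hcomb : (θ i + (1 - W i i) / α) / 2 * ‖u - p‖ ^ 2
        + (1 / γ i) / 2 * ‖u - p‖ ^ 2 + ‖u - a‖ ^ 2 / (2 * γ i)
        ≤ ‖a - p‖ ^ 2 / (2 * γ i) + β i / 2 * ‖u - a‖ ^ 2
          + (1 - W i i) / α / 2 * C := by
      linarith [hF, hG, hm1, hm2, hNα]
    -- clear denominators
    set σv := (1 - W i i) / α with hσv
    set A1 := ‖u - a‖ ^ 2 with hA1
    set A2 := ‖u - p‖ ^ 2 with hA2
    set A3 := ‖a - p‖ ^ 2 with hA3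
    have e1 := mul_le_mul_of_nonneg_left hcomb (by positivity : (0:ℝ) ≤ 2 * γ i)
    have elhs : 2 * γ i * ((θ i + σv) / 2 * A2 + (1 / γ i) / 2 * A2 + A1 / (2 * γ i))
        = γ i * (θ i + σv) * A2 + A2 + A1 := by
      field_simp
    have erhs : 2 * γ i * (A3 / (2 * γ i) + β i / 2 * A1 + σv / 2 * C)
        = A3 + γ i * β i * A1 + γ i * σv * C := by
      field_simp
    rw [elhs, erhs, hC] at e1
    have P1 : 0 ≤ (1 - γ i * (β i + σv)) * A1 :=
      mul_nonneg (by linarith) (by positivity)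
    have P2 : 0 ≤ (1 - γ i * σv) * (M - A3) := by
      have hβ0 := hβ i
      have : γ i * σv ≤ γ i * (β i + σv) := by nlinarith [hγ0.le, hβ0]
      exact mul_nonneg (by linarith) (by linarith [hM1])
    have hA2n : (0:ℝ) ≤ A2 := by positivity
    nlinarith [e1, P1, P2]
  classical
  set T := B + D + 1 with hT
  have hT1 : 0 < T := by omega
  set μ := Finset.univ.inf' Finset.univ_nonempty (fun i => γ i * θ i) with hμ
  have hμpos : 0 < μ := by
    rw [hμ, Finset.lt_inf'_iff]
    intro i _
    exact mul_pos (hγpos i) (hθ i)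
  have hρ0 : 0 < ρ := by rw [hρ]; positivity
  have hρ1 : ρ < 1 := by
    rw [hρ, div_lt_one (by linarith)]; linarith
  have hρle : ∀ i, 1 / (1 + γ i * θ i) ≤ ρ := by
    intro i
    rw [hρ]
    have h1 : μ ≤ γ i * θ i := Finset.inf'_le _ (Finset.mem_univ i)
    exact one_div_le_one_div_of_le (by linarith) (by linarith)
  set V0 := Finset.univ.sup' Finset.univ_nonempty (fun j => ‖x 0 j - xstar j‖ ^ 2) with hV0
  have hV0nonneg : 0 ≤ V0 := le_trans (by positivity)
    (Finset.le_sup' (fun j => ‖x 0 j - xstar j‖ ^ 2) (Finset.mem_univ (0 : Fin (n + 1))))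
  have Rmono : ∀ a b : ℕ, a ≤ b → ρ ^ (b / T) * V0 ≤ ρ ^ (a / T) * V0 := by
    intro a b hab
    exact mul_le_mul_of_nonneg_right
      (pow_le_pow_of_le_one hρ0.le hρ1.le (Nat.div_le_div_right hab)) hV0nonneg
  have const : ∀ (i : Fin (n + 1)) (l t : ℕ),
      (∀ m', l ≤ m' → m' < l + t → m' ∉ K i) → x (l + t) i = x l i := by
    intro i l t
    induction t with
    | zero => intro _; rfl
    | succ t ih =>
      intro hnone
      rw [show l + (t + 1) = (l + t) + 1 from rfl,
        hnoupdate i (l + t) (hnone _ (Nat.le_add_right _ _) (by omega)),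
        ih (fun m' hm1 hm2 => hnone m' hm1 (by omega))]
  have main : ∀ k (i : Fin (n + 1)), ‖x k i - xstar i‖ ^ 2 ≤ ρ ^ (k / T) * V0 := by
    intro k
    induction k using Nat.strong_induction_on with
    | _ k ih =>
    intro i
    rcases Nat.eq_zero_or_pos k with rfl | hk0
    · simp only [Nat.zero_div, pow_zero, one_mul]
      exact Finset.le_sup' (fun j => ‖x 0 j - xstar j‖ ^ 2) (Finset.mem_univ i)
    by_cases hex : ∃ l, l < k ∧ l ∈ K i
    · obtain ⟨l0, hl0k, hl0K⟩ := hex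
      set l := Nat.findGreatest (fun l => l ∈ K i) (k - 1) with hlD
      have hl0le : l0 ≤ k - 1 := by omega
      have hlK : l ∈ K i := Nat.findGreatest_spec hl0le hl0K
      have hlk : l < k := lt_of_le_of_lt (Nat.findGreatest_le _) (by omega)
      have hgr : ∀ m', l < m' → m' ≤ k - 1 → m' ∉ K i := by
        intro m' h1 h2
        rw [hlD] at h1
        exact Nat.findGreatest_is_greatest h1 h2
      have hxk : x k i = x (l + 1) i := by
        have hc := const i (l + 1) (k - (l + 1)) (fun m' hm1 hm2 =>
          hgr m' (by omega) (by omega))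
        rwa [show l + 1 + (k - (l + 1)) = k by omega] at hc
      have hstep := step i l hlK (ρ ^ ((l - D) / T) * V0)
        (le_trans (ih l hlk i) (Rmono (l - D) l (Nat.sub_le _ _)))
        (fun j => le_trans (ih (s i j l) (by have := hsle i j l hlK; omega) j)
          (Rmono (l - D) (s i j l) (hD i j l hlK)))
      have hpos : (0:ℝ) < 1 + γ i * θ i := by nlinarith [hγpos i, hθ i]
      have hRnn : (0:ℝ) ≤ ρ ^ ((l - D) / T) * V0 :=
        mul_nonneg (pow_nonneg hρ0.le _) hV0nonneg
      have h1 : ‖x (l + 1) i - xstar i‖ ^ 2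
          ≤ (1 / (1 + γ i * θ i)) * (ρ ^ ((l - D) / T) * V0) := by
        rw [one_div, inv_mul_eq_div, le_div_iff₀ hpos]
        linarith [hstep]
      have h2 : (1 / (1 + γ i * θ i)) * (ρ ^ ((l - D) / T) * V0)
          ≤ ρ * (ρ ^ ((l - D) / T) * V0) :=
        mul_le_mul_of_nonneg_right (hρle i) hRnn
      have hexp : k / T ≤ (l - D) / T + 1 := by
        rcases le_or_gt k B with hkB | hkB
        · rw [Nat.div_eq_of_lt (by omega : k < T)]
          exact Nat.zero_le _
        · obtain ⟨m', hm'K, hm'1, hm'2⟩ := hB i (k - 1 - B)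
          have hm'l : m' ≤ l := by
            have := Nat.le_findGreatest (m := m') (n := k - 1) (by omega) hm'K
            rw [← hlD] at this
            exact this
          have hkle : k ≤ (l - D) + T := by omega
          calc k / T ≤ ((l - D) + T) / T := Nat.div_le_div_right hkle
            _ = (l - D) / T + 1 := by rw [Nat.add_div_right _ hT1]
      have h3 : ρ * (ρ ^ ((l - D) / T) * V0) ≤ ρ ^ (k / T) * V0 := by
        rw [← mul_assoc, ← pow_succ']
        exact mul_le_mul_of_nonneg_right
          (pow_le_pow_of_le_one hρ0.le hρ1.le hexp) hV0nonneg
      rw [hxk]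
      linarith
    · push_neg at hex
      have hxk : x k i = x 0 i := by
        have hc := const i 0 k (fun m' _ hm2 => hex m' (by omega))
        simpa using hc
      obtain ⟨m', hm'K, _, hm'B⟩ := hB i 0
      have hkB : k ≤ B := by
        by_contra hc
        exact hex m' (by omega) hm'K
      have h0 : k / T = 0 := Nat.div_eq_of_lt (by omega)
      rw [hxk, h0, pow_zero, one_mul]
      exact Finset.le_sup' (fun j => ‖x 0 j - xstar j‖ ^ 2) (Finset.mem_univ i)
  exact ⟨⟨hρ0, hρ1⟩, fun i k => main k i⟩
end

section
/- (Theorem 1, part 2.) Consider the asynchronous DPBM setup under total asynchrony, and assume in addition that each φ_i := f_i + h_i is θ_i-strongly convex with θ_i > 0. Then for every node i, x_i^k → x*_i as k → ∞ (the iterates converge to the optimal solution of the penalized problem, which is unique by strong convexity). -/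
open scoped RealInnerProductSpace

lemma aux_lim {A K : ℝ} (hK : 0 ≤ K)
    (h : ∀ t : ℝ, 0 < t → t ≤ 1 → 0 ≤ A + t * K) : 0 ≤ A := by
  by_contra hA
  push_neg at hA
  set t : ℝ := min 1 (-A / (2 * K + 2)) with htdef
  have hc : (0:ℝ) < 2 * K + 2 := by linarith
  have ht0 : 0 < t := lt_min one_pos (div_pos (by linarith) hc)
  have ht1 : t ≤ 1 := min_le_left _ _
  have ht2 : t ≤ -A / (2 * K + 2) := min_le_right _ _
  have h5 : t * (2 * K + 2) ≤ -A := by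
    rw [← le_div_iff₀ hc]; exact ht2
  have h6 : t * K < t * (2 * K + 2) := by nlinarith
  have := h t ht0 ht1
  linarith

lemma aux_norm_add_tsmul {E : Type*} [NormedAddCommGroup E] [InnerProductSpace ℝ E]
    (a v : E) (t : ℝ) :
    ‖a + t • v‖ ^ 2 = ‖a‖ ^ 2 + 2 * (t * ⟪a, v⟫) + t ^ 2 * ‖v‖ ^ 2 := by
  have h1 := norm_add_sq_real a (t • v)
  rw [real_inner_smul_right] at h1
  rw [h1, norm_smul, Real.norm_eq_abs, mul_pow, sq_abs]

lemma aux_norm_combo {E : Type*} [NormedAddCommGroup E] [InnerProductSpace ℝ E]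
    (x y : E) (t : ℝ) :
    ‖(1 - t) • x + t • y‖ ^ 2
      = (1 - t) * ‖x‖ ^ 2 + t * ‖y‖ ^ 2 - t * (1 - t) * ‖x - y‖ ^ 2 := by
  have h1 := norm_add_sq_real ((1 - t) • x) (t • y)
  have h2 := norm_sub_sq_real x y
  have h3 : ⟪(1 - t) • x, t • y⟫ = (1 - t) * (t * ⟪x, y⟫) := by
    rw [real_inner_smul_left, real_inner_smul_right]
  have h4 : ‖(1 - t) • x‖ ^ 2 = (1 - t) ^ 2 * ‖x‖ ^ 2 := by
    rw [norm_smul, Real.norm_eq_abs, mul_pow, sq_abs]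
  have h5 : ‖t • y‖ ^ 2 = t ^ 2 * ‖y‖ ^ 2 := by
    rw [norm_smul, Real.norm_eq_abs, mul_pow, sq_abs]
  nlinarith [h1, h2, h3, h4, h5]

lemma aux_strong_combo {E : Type*} [NormedAddCommGroup E] [InnerProductSpace ℝ E]
    {φ : E → ℝ} {θ : ℝ}
    (hsc : ConvexOn ℝ Set.univ (fun z => φ z - θ / 2 * ‖z‖ ^ 2))
    (x y : E) {t : ℝ} (h0 : 0 ≤ t) (h1 : t ≤ 1) :
    φ ((1 - t) • x + t • y)
      ≤ (1 - t) * φ x + t * φ y - θ / 2 * (t * (1 - t) * ‖x - y‖ ^ 2) := by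
  have hc := hsc.2 (Set.mem_univ x) (Set.mem_univ y)
    (show (0:ℝ) ≤ 1 - t by linarith) h0 (by ring)
  simp only [smul_eq_mul] at hc
  rw [aux_norm_combo x y t] at hc
  linarith [hc]

set_option maxHeartbeats 1000000 in
/-- Theorem 1, part 2: under total asynchrony, if each local objective
`φ_i = f_i + h_i` is strongly convex, the iterates of asynchronous DPBM
converge to the minimizer of the penalized problem.
The `n + 1` nodes are indexed by `Fin (n + 1)` (so there is at least one node). -/
theorem stmt_8 {d n : ℕ} (hd : 1 ≤ d)
    -- averaging matrix
    (W : Matrix (Fin (n + 1)) (Fin (n + 1)) ℝ)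
    (hWsymm : W.IsSymm)
    (hWnonneg : ∀ i j, 0 ≤ W i j)
    (hWrow : ∀ i, ∑ j, W i j = 1)
    (hWdiag : ∀ i, 0 < W i i)
    (hconn : (SimpleGraph.fromRel (fun i j : Fin (n + 1) => 0 < W i j)).Connected)
    -- local objective functions
    (f h : Fin (n + 1) → EuclideanSpace ℝ (Fin d) → ℝ)
    (hfconv : ∀ i, ConvexOn ℝ Set.univ (f i))
    (hfdiff : ∀ i, Differentiable ℝ (f i))
    (hhconv : ∀ i, ConvexOn ℝ Set.univ (h i))
    -- penalized objective and its minimizer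
    (α : ℝ) (hα : 0 < α)
    (Φ : (Fin (n + 1) → EuclideanSpace ℝ (Fin d)) → ℝ)
    (hΦ : ∀ x, Φ x = (∑ i, (f i (x i) + h i (x i)))
        + (1 / (4 * α)) * ∑ i, ∑ j, W i j * ‖x i - x j‖ ^ 2)
    (xstar : Fin (n + 1) → EuclideanSpace ℝ (Fin d))
    (hxstar : ∀ y, Φ xstar ≤ Φ y)
    -- update times and delayed indices
    (K : Fin (n + 1) → Set ℕ)
    (s : Fin (n + 1) → Fin (n + 1) → ℕ → ℕ)
    (hsii : ∀ i, ∀ k ∈ K i, s i i k = k)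
    (hsle : ∀ i j, ∀ k ∈ K i, s i j k ≤ k)
    -- iterates and models
    (x : ℕ → Fin (n + 1) → EuclideanSpace ℝ (Fin d))
    (β : Fin (n + 1) → ℝ) (hβ : ∀ i, 0 ≤ β i)
    (m : Fin (n + 1) → ℕ → EuclideanSpace ℝ (Fin d) → ℝ)
    (hmconv : ∀ i, ∀ k ∈ K i, ConvexOn ℝ Set.univ (m i k))
    (hmle : ∀ i, ∀ k ∈ K i, ∀ y, m i k y ≤ f i y)
    (hmge : ∀ i, ∀ k ∈ K i, ∀ y, f i y ≤ m i k y + β i / 2 * ‖y - x k i‖ ^ 2)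
    -- step-sizes
    (γ : Fin (n + 1) → ℝ)
    (hγpos : ∀ i, 0 < γ i)
    (hγlt : ∀ i, γ i < 1 / (β i + (1 - W i i) / α))
    -- the algorithm update
    (hupdate : ∀ i, ∀ k ∈ K i, ∀ z,
      m i k (x (k + 1) i) + h i (x (k + 1) i)
          + ‖x (k + 1) i - x k i‖ ^ 2 / (2 * γ i)
          + (1 / α) * ⟪∑ j, W i j • (x k i - x (s i j k) j), x (k + 1) i⟫
        ≤ m i k z + h i z + ‖z - x k i‖ ^ 2 / (2 * γ i)
          + (1 / α) * ⟪∑ j, W i j • (x k i - x (s i j k) j), z⟫)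
    (hnoupdate : ∀ i, ∀ k, k ∉ K i → x (k + 1) i = x k i)
    -- total asynchrony
    (hKinf : ∀ i, (K i).Infinite)
    (hstot : ∀ i j, ∀ M : ℕ, ∃ N : ℕ, ∀ k ∈ K i, N ≤ k → M ≤ s i j k)
    -- strong convexity
    (θ : Fin (n + 1) → ℝ) (hθ : ∀ i, 0 < θ i)
    (hsc : ∀ i, ConvexOn ℝ Set.univ
      (fun z => f i z + h i z - θ i / 2 * ‖z‖ ^ 2)) :
    ∀ i, Filter.Tendsto (fun k => x k i) Filter.atTop (nhds (xstar i)) := by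
  classical
  -- basic facts about W
  have hWs : ∀ p q, W q p = W p q := fun p q => by
    conv_lhs => rw [← hWsymm]
    exact Matrix.transpose_apply W q p
  have hWle1 : ∀ i, W i i ≤ 1 := by
    intro i
    have h1 : W i i ≤ ∑ j, W i j :=
      Finset.single_le_sum (fun j _ => hWnonneg i j) (Finset.mem_univ i)
    rw [hWrow i] at h1; exact h1
  -- optimality of xstar (Lemma A)
  have optA : ∀ i z, f i (xstar i) + h i (xstar i) ≤ f i z + h i z
      + (1 / α) * ⟪∑ j, W i j • (xstar i - xstar j), z - xstar i⟫
      - θ i / 2 * ‖z - xstar i‖ ^ 2 := by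
    intro i z
    set G := ∑ j, W i j • (xstar i - xstar j) with hG
    set v := z - xstar i with hv
    have key : 0 ≤ (f i z + h i z - (f i (xstar i) + h i (xstar i))
        + (1 / α) * ⟪G, v⟫ - θ i / 2 * ‖v‖ ^ 2) := by
      apply aux_lim (K := (θ i / 2 + (1 - W i i) / (2 * α)) * ‖v‖ ^ 2)
      · have h2 : 0 ≤ (1 - W i i) / (2 * α) :=
          div_nonneg (by linarith [hWle1 i]) (by positivity)
        have h3 : 0 ≤ θ i / 2 + (1 - W i i) / (2 * α) := by linarith [hθ i]
        exact mul_nonneg h3 (by positivity)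
      intro t ht0 ht1
      set u := xstar i + t • v with hu
      set y := Function.update xstar i u with hy
      have h1 := hxstar y
      rw [hΦ, hΦ] at h1
      have hyi : y i = u := Function.update_self i u xstar
      have hyj : ∀ j, j ≠ i → y j = xstar j := fun j hj => Function.update_of_ne hj u xstar
      -- the sum of local objectives
      have hsum1 : ∑ j, (f j (y j) + h j (y j))
          = (f i u + h i u) + ∑ j ∈ Finset.univ.erase i, (f j (xstar j) + h j (xstar j)) := by
        rw [← Finset.add_sum_erase _ _ (Finset.mem_univ i), hyi]
        congr 1
        refine Finset.sum_congr rfl fun j hj => ?_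
        rw [hyj j (Finset.ne_of_mem_erase hj)]
      have hsum2 : ∑ j, (f j (xstar j) + h j (xstar j))
          = (f i (xstar i) + h i (xstar i))
            + ∑ j ∈ Finset.univ.erase i, (f j (xstar j) + h j (xstar j)) :=
        (Finset.add_sum_erase _ _ (Finset.mem_univ i)).symm
      -- the penalty term
      have hpen : ∑ p, ∑ q, W p q * ‖y p - y q‖ ^ 2
          = (∑ p, ∑ q, W p q * ‖xstar p - xstar q‖ ^ 2)
            + (4 * (t * ⟪G, v⟫) + 2 * (1 - W i i) * (t ^ 2 * ‖v‖ ^ 2)) := by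
        set Δ : Fin (n+1) → Fin (n+1) → ℝ :=
          fun p q => W p q * ‖y p - y q‖ ^ 2 - W p q * ‖xstar p - xstar q‖ ^ 2 with hΔ
        have hsplit : ∀ p q, W p q * ‖y p - y q‖ ^ 2
            = W p q * ‖xstar p - xstar q‖ ^ 2 + Δ p q := fun p q => by
          simp only [hΔ]; ring
        have hΔ0 : ∀ p q, p ≠ i → q ≠ i → Δ p q = 0 := by
          intro p q hp hq
          simp only [hΔ, hyj p hp, hyj q hq, sub_self]
        have hΔii : Δ i i = 0 := by
          simp only [hΔ, sub_self, norm_zero]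
        have hΔsym : ∀ p, Δ p i = Δ i p := by
          intro p
          simp only [hΔ, hWs p i, norm_sub_rev (y p) (y i), norm_sub_rev (xstar p) (xstar i)]
        have hinner : ∀ p, p ≠ i → ∑ q, Δ p q = Δ p i := by
          intro p hp
          exact Finset.sum_eq_single i (fun q _ hq => hΔ0 p q hp hq)
            (fun habs => absurd (Finset.mem_univ i) habs)
        have hΔiq : ∀ q, Δ i q
            = W i q * (2 * (t * ⟪xstar i - xstar q, v⟫) + t ^ 2 * ‖v‖ ^ 2)
              - (if q = i then W i i * (t ^ 2 * ‖v‖ ^ 2) else 0) := by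
          intro q
          by_cases hq : q = i
          · subst hq
            rw [if_pos rfl]
            simp only [hΔ, sub_self, norm_zero, inner_zero_left]
            ring
          · simp only [if_neg hq, hΔ, hyi, hyj q hq]
            have huq : u - xstar q = (xstar i - xstar q) + t • v := by
              rw [hu]; abel
            rw [huq, aux_norm_add_tsmul]
            ring
        have hrow : ∑ q, Δ i q = 2 * (t * ⟪G, v⟫) + (1 - W i i) * (t ^ 2 * ‖v‖ ^ 2) := by
          rw [Finset.sum_congr rfl fun q _ => hΔiq q]
          rw [Finset.sum_sub_distrib]
          rw [Finset.sum_ite_eq' Finset.univ i (fun _ => W i i * (t ^ 2 * ‖v‖ ^ 2))]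
          simp only [Finset.mem_univ, if_pos]
          have e1 : ∑ q, W i q * (2 * (t * ⟪xstar i - xstar q, v⟫) + t ^ 2 * ‖v‖ ^ 2)
              = 2 * t * (∑ q, W i q * ⟪xstar i - xstar q, v⟫)
                + (∑ q, W i q) * (t ^ 2 * ‖v‖ ^ 2) := by
            rw [Finset.sum_mul, Finset.mul_sum, ← Finset.sum_add_distrib]
            refine Finset.sum_congr rfl fun q _ => by ring
          rw [e1, hWrow i]
          have e2 : ⟪G, v⟫ = ∑ q, W i q * ⟪xstar i - xstar q, v⟫ := by
            rw [hG, sum_inner]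
            exact Finset.sum_congr rfl fun q _ => real_inner_smul_left _ _ _
          rw [e2]; ring
        calc ∑ p, ∑ q, W p q * ‖y p - y q‖ ^ 2
            = ∑ p, ∑ q, (W p q * ‖xstar p - xstar q‖ ^ 2 + Δ p q) := by
              refine Finset.sum_congr rfl fun p _ => Finset.sum_congr rfl fun q _ => hsplit p q
          _ = (∑ p, ∑ q, W p q * ‖xstar p - xstar q‖ ^ 2) + ∑ p, ∑ q, Δ p q := by
              rw [← Finset.sum_add_distrib]
              refine Finset.sum_congr rfl fun p _ => by rw [← Finset.sum_add_distrib]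
          _ = _ := by
              congr 1
              have e3 : ∑ p, ∑ q, Δ p q = (∑ q, Δ i q) + ∑ p ∈ Finset.univ.erase i, ∑ q, Δ p q :=
                (Finset.add_sum_erase _ _ (Finset.mem_univ i)).symm
              have e4 : ∑ p ∈ Finset.univ.erase i, ∑ q, Δ p q = ∑ p ∈ Finset.univ.erase i, Δ i p := by
                refine Finset.sum_congr rfl fun p hp => ?_
                rw [hinner p (Finset.ne_of_mem_erase hp), hΔsym p]
              have e5 : ∑ p ∈ Finset.univ.erase i, Δ i p = ∑ p, Δ i p :=
                Finset.sum_erase _ hΔii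
              rw [e3, e4, e5, hrow]; ring
      -- combine
      rw [hsum1, hsum2, hpen] at h1
      have hq1 : f i (xstar i) + h i (xstar i) ≤ f i u + h i u
          + (1 / (4 * α)) * (4 * (t * ⟪G, v⟫) + 2 * (1 - W i i) * (t ^ 2 * ‖v‖ ^ 2)) := by
        linarith [h1]
      have hu2 : u = (1 - t) • xstar i + t • z := by
        rw [hu, hv, smul_sub, sub_smul, one_smul]; abel
      have hcomb := aux_strong_combo (hsc i) (xstar i) z ht0.le ht1
      rw [← hu2] at hcomb
      have hnv : ‖xstar i - z‖ = ‖v‖ := by rw [hv, norm_sub_rev]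
      rw [hnv] at hcomb
      have hexp : (1 / (4 * α)) * (4 * (t * ⟪G, v⟫) + 2 * (1 - W i i) * (t ^ 2 * ‖v‖ ^ 2))
          = t * ((1 / α) * ⟪G, v⟫) + t ^ 2 * ((1 - W i i) / (2 * α) * ‖v‖ ^ 2) := by
        field_simp; ring
      rw [hexp] at hq1
      have hmul : 0 ≤ t * ((f i z + h i z - (f i (xstar i) + h i (xstar i))
          + (1 / α) * ⟪G, v⟫ - θ i / 2 * ‖v‖ ^ 2)
          + t * ((θ i / 2 + (1 - W i i) / (2 * α)) * ‖v‖ ^ 2)) := by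
        nlinarith [hq1, hcomb, sq_nonneg t]
      exact nonneg_of_mul_nonneg_right hmul ht0
    linarith [key]
  -- step-size facts
  have key1 : ∀ i, β i + (1 - W i i) / α < 1 / γ i := by
    intro i
    have hq0' : 0 ≤ (1 - W i i) / α := div_nonneg (by linarith [hWle1 i]) hα.le
    rcases lt_or_ge 0 (β i + (1 - W i i) / α) with hpos | hle
    · have h1 := hγlt i
      have h2 := one_div_lt_one_div_of_lt (hγpos i) h1
      rwa [one_div_one_div] at h2
    · exfalso
      have h0 : β i + (1 - W i i) / α = 0 := le_antisymm hle (by linarith [hβ i])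
      have h1 := hγlt i
      rw [h0, div_zero] at h1
      exact absurd h1 (not_lt.mpr (hγpos i).le)
  set q : Fin (n+1) → ℝ := fun i => (1 - W i i) / α with hqdef
  set r : Fin (n+1) → ℝ := fun i => 1 / γ i - β i with hrdef
  have hq0 : ∀ i, 0 ≤ q i := fun i => div_nonneg (by linarith [hWle1 i]) hα.le
  have hqr : ∀ i, q i < r i := by
    intro i; have := key1 i; simp only [hqdef, hrdef]; linarith
  have hγr : ∀ i, 1 / γ i = β i + r i := by
    intro i; simp only [hrdef]; ring
  clear_value q r
  have hr0 : ∀ i, 0 < r i := fun i => lt_of_le_of_lt (hq0 i) (hqr i)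
  have hA0 : ∀ i, 0 < θ i / 2 + β i / 2 + r i := by
    intro i
    have h1 := hθ i
    have h2 := hβ i
    have h3 := hr0 i
    linarith
  set ρf : Fin (n+1) → ℝ :=
    fun i => Real.sqrt ((β i / 2 + r i) / (θ i / 2 + β i / 2 + r i)) with hρfdef
  have hρf0 : ∀ i, 0 ≤ ρf i := fun i => Real.sqrt_nonneg _
  have hρflt : ∀ i, ρf i < 1 := by
    intro i
    simp only [hρfdef]
    rw [Real.sqrt_lt' one_pos]
    rw [div_lt_iff₀ (hA0 i)]
    nlinarith [hθ i, hβ i, hr0 i]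
  clear_value ρf
  have hne : (Finset.univ : Finset (Fin (n+1))).Nonempty := Finset.univ_nonempty
  set ρ : ℝ := Finset.univ.sup' hne ρf with hρdef
  have hρfle : ∀ i, ρf i ≤ ρ := fun i => Finset.le_sup' ρf (Finset.mem_univ i)
  have hρ0 : 0 ≤ ρ := le_trans (hρf0 ⟨0, n.succ_pos⟩) (hρfle _)
  have hρlt : ρ < 1 := (Finset.sup'_lt_iff hne).mpr fun i _ => hρflt i
  clear_value ρ
  -- optimality of the update (Lemma B)
  have optB : ∀ i, ∀ k ∈ K i, ∀ w,
      m i k (x (k+1) i) + h i (x (k+1) i) ≤ m i k w + h i w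
        + (1 / γ i) * ⟪x (k+1) i - x k i, w - x (k+1) i⟫
        + (1 / α) * ⟪∑ j, W i j • (x k i - x (s i j k) j), w - x (k+1) i⟫ := by
    intro i k hk w
    set g := ∑ j, W i j • (x k i - x (s i j k) j) with hg
    set xp := x (k+1) i with hxp
    set xc := x k i with hxc
    set u := w - xp with huu
    clear_value g xp xc u
    have key : 0 ≤ (m i k w + h i w - (m i k xp + h i xp)
        + (1 / γ i) * ⟪xp - xc, u⟫ + (1 / α) * ⟪g, u⟫) := by
      apply aux_lim (K := ‖u‖ ^ 2 / (2 * γ i))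
      · exact div_nonneg (by positivity) (by linarith [hγpos i])
      intro t ht0 ht1
      have h1 := hupdate i k hk (xp + t • u)
      rw [← hxc, ← hxp, ← hg] at h1
      have hcv : xp + t • u = (1 - t) • xp + t • w := by
        rw [huu, smul_sub, sub_smul, one_smul]; abel
      have hm := (hmconv i k hk).2 (Set.mem_univ xp) (Set.mem_univ w)
        (show (0:ℝ) ≤ 1 - t by linarith) ht0.le (by ring)
      have hh := (hhconv i).2 (Set.mem_univ xp) (Set.mem_univ w)
        (show (0:ℝ) ≤ 1 - t by linarith) ht0.le (by ring)
      simp only [smul_eq_mul] at hm hh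
      rw [← hcv] at hm hh
      have hnorm : ‖xp + t • u - xc‖ ^ 2
          = ‖xp - xc‖ ^ 2 + 2 * (t * ⟪xp - xc, u⟫) + t ^ 2 * ‖u‖ ^ 2 := by
        have e : xp + t • u - xc = (xp - xc) + t • u := by abel
        rw [e, aux_norm_add_tsmul]
      have hinner2 : ⟪g, xp + t • u⟫ = ⟪g, xp⟫ + t * ⟪g, u⟫ := by
        rw [inner_add_right, real_inner_smul_right]
      rw [hnorm, hinner2] at h1
      have hγ0 : (0:ℝ) < γ i := hγpos i
      have hdiv : (‖xp - xc‖ ^ 2 + 2 * (t * ⟪xp - xc, u⟫) + t ^ 2 * ‖u‖ ^ 2) / (2 * γ i)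
          = ‖xp - xc‖ ^ 2 / (2 * γ i) + t * ((1 / γ i) * ⟪xp - xc, u⟫)
            + t ^ 2 * (‖u‖ ^ 2 / (2 * γ i)) := by
        field_simp
      rw [hdiv] at h1
      have hmul : 0 ≤ t * ((m i k w + h i w - (m i k xp + h i xp)
          + (1 / γ i) * ⟪xp - xc, u⟫ + (1 / α) * ⟪g, u⟫) + t * (‖u‖ ^ 2 / (2 * γ i))) := by
        nlinarith [h1, hm, hh]
      exact nonneg_of_mul_nonneg_right hmul ht0
    linarith [key]
  -- per-update contraction
  have contr : ∀ i, ∀ k ∈ K i, ∀ M, 0 ≤ M → ‖x k i - xstar i‖ ≤ M →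
      (∀ j, ‖x (s i j k) j - xstar j‖ ≤ M) → ‖x (k+1) i - xstar i‖ ≤ ρ * M := by
    intro i k hk M hM0 hMe hMs
    set xp := x (k+1) i with hxp
    set xc := x k i with hxc
    set ep := xp - xstar i with hep
    set e := xc - xstar i with he
    set gs := ∑ j, W i j • (xc - x (s i j k) j) with hgs
    set Gs := ∑ j, W i j • (xstar i - xstar j) with hGs
    clear_value xp xc ep e gs Gs
    have hB := optB i k hk (xstar i)
    rw [← hxp, ← hxc, ← hgs] at hB
    have hA := optA i xp
    rw [← hGs, ← hep] at hA
    have hm1 := hmge i k hk xp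
    rw [← hxc] at hm1
    have hm2 := hmle i k hk (xstar i)
    have hneg : xstar i - xp = -ep := by rw [hep]; abel
    have n1 : ⟪xp - xc, xstar i - xp⟫ = -⟪xp - xc, ep⟫ := by
      rw [hneg, inner_neg_right]
    have n2 : ⟪gs, xstar i - xp⟫ = -⟪gs, ep⟫ := by
      rw [hneg, inner_neg_right]
    rw [n1, n2] at hB
    -- the master inequality
    have star : θ i / 2 * ‖ep‖ ^ 2 + (1 / γ i) * ⟪xp - xc, ep⟫
        + (1 / α) * (⟪gs, ep⟫ - ⟪Gs, ep⟫) ≤ β i / 2 * ‖xp - xc‖ ^ 2 := by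
      linarith [hB, hA, hm1, hm2]
    have hdelta : xp - xc = ep - e := by rw [hep, he]; abel
    have c1 : ⟪xp - xc, ep⟫ = ‖ep‖ ^ 2 - ⟪e, ep⟫ := by
      rw [hdelta, inner_sub_left, real_inner_self_eq_norm_sq]
    have c2 : ‖xp - xc‖ ^ 2 = ‖ep‖ ^ 2 - 2 * ⟪e, ep⟫ + ‖e‖ ^ 2 := by
      rw [hdelta, norm_sub_sq_real, real_inner_comm]
    -- expand the coupling term
    have e1 : ⟪gs, ep⟫ = ∑ j, W i j * ⟪xc - x (s i j k) j, ep⟫ := by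
      rw [hgs, sum_inner]
      exact Finset.sum_congr rfl fun j _ => real_inner_smul_left _ _ _
    have e2 : ⟪Gs, ep⟫ = ∑ j, W i j * ⟪xstar i - xstar j, ep⟫ := by
      rw [hGs, sum_inner]
      exact Finset.sum_congr rfl fun j _ => real_inner_smul_left _ _ _
    have e3 : ⟪e, ep⟫ = ∑ j, W i j * ⟪e, ep⟫ := by
      rw [← Finset.sum_mul, hWrow, one_mul]
    have c3 : ⟪gs, ep⟫ - ⟪Gs, ep⟫
        = ⟪e, ep⟫ - ∑ j, W i j * ⟪x (s i j k) j - xstar j, ep⟫ := by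
      rw [e1, e2]
      conv_rhs => rw [e3]
      rw [← Finset.sum_sub_distrib, ← Finset.sum_sub_distrib]
      refine Finset.sum_congr rfl fun j _ => ?_
      rw [← mul_sub, ← mul_sub]
      congr 1
      rw [← inner_sub_left, ← inner_sub_left]
      congr 1
      rw [he, hxc]
      abel
    set Sfull := ∑ j, W i j * ⟪x (s i j k) j - xstar j, ep⟫ with hSfull
    set Ser := ∑ j ∈ Finset.univ.erase i, W i j * ⟪x (s i j k) j - xstar j, ep⟫ with hSer
    have c4 : Sfull = W i i * ⟪e, ep⟫ + Ser := by
      rw [hSfull, hSer, ← Finset.add_sum_erase _ _ (Finset.mem_univ i)]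
      congr 2
      rw [hsii i k hk, he, hxc]
    -- bounds
    have b1 : ⟪e, ep⟫ ≤ M * ‖ep‖ :=
      le_trans (real_inner_le_norm e ep)
        (mul_le_mul_of_nonneg_right hMe (norm_nonneg _))
    have b0 : ‖e‖ ^ 2 ≤ M ^ 2 := by nlinarith [norm_nonneg e, hMe]
    have hWer : ∑ j ∈ Finset.univ.erase i, W i j = 1 - W i i := by
      have h1 := Finset.add_sum_erase Finset.univ (W i) (Finset.mem_univ i)
      rw [hWrow i] at h1
      linarith
    have b2 : Ser ≤ (1 - W i i) * (M * ‖ep‖) := by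
      rw [hSer, ← hWer, Finset.sum_mul]
      refine Finset.sum_le_sum fun j hj => ?_
      refine mul_le_mul_of_nonneg_left ?_ (hWnonneg i j)
      refine le_trans (real_inner_le_norm _ _) ?_
      refine mul_le_mul_of_nonneg_right ?_ (norm_nonneg _)
      have := hMs j
      rwa [← (show xstar j = xstar j from rfl)] at this
    -- assemble the scalar contraction
    rw [c1, c2, c3, c4, hγr i] at star
    have d1 : (1 / α) * Ser ≤ (1 / α) * ((1 - W i i) * (M * ‖ep‖)) :=
      mul_le_mul_of_nonneg_left b2 (by positivity)
    have d2 : (1 / α) * ((1 - W i i) * (M * ‖ep‖)) = q i * (M * ‖ep‖) := by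
      simp only [hqdef]; field_simp
    have d3 : (r i - q i) * ⟪e, ep⟫ ≤ (r i - q i) * (M * ‖ep‖) :=
      mul_le_mul_of_nonneg_left b1 (by linarith [hqr i])
    have d4 : (1 / α) * (⟪e, ep⟫ - (W i i * ⟪e, ep⟫ + Ser))
        = q i * ⟪e, ep⟫ - (1 / α) * Ser := by
      simp only [hqdef]; field_simp; ring
    have final2 : (θ i / 2 + β i / 2 + r i) * ‖ep‖ ^ 2
        ≤ β i / 2 * M ^ 2 + r i * (M * ‖ep‖) := by
      rw [d4] at star
      have d5 : β i / 2 * ‖e‖ ^ 2 ≤ β i / 2 * M ^ 2 :=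
        mul_le_mul_of_nonneg_left b0 (by linarith [hβ i])
      linarith [star, d1, d2, d3, d5]
    have hPM : ‖ep‖ ≤ M := by
      by_contra hcon
      push_neg at hcon
      have e5' : M ^ 2 ≤ ‖ep‖ ^ 2 := pow_le_pow_left₀ hM0 hcon.le 2
      have e6 : β i / 2 * M ^ 2 ≤ β i / 2 * ‖ep‖ ^ 2 :=
        mul_le_mul_of_nonneg_left e5' (by linarith [hβ i])
      have e6' : M * ‖ep‖ ≤ ‖ep‖ ^ 2 := by
        rw [pow_two]
        exact mul_le_mul_of_nonneg_right hcon.le (norm_nonneg ep)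
      have e7 : r i * (M * ‖ep‖) ≤ r i * ‖ep‖ ^ 2 :=
        mul_le_mul_of_nonneg_left e6' (hr0 i).le
      have e8 : 0 < ‖ep‖ := lt_of_le_of_lt hM0 hcon
      have e9 : 0 < ‖ep‖ ^ 2 := by rw [pow_two]; exact mul_pos e8 e8
      have e10 : 0 < θ i / 2 * ‖ep‖ ^ 2 := mul_pos (by linarith [hθ i]) e9
      linarith [final2, e6, e7, e10]
    have final3 : (θ i / 2 + β i / 2 + r i) * ‖ep‖ ^ 2 ≤ (β i / 2 + r i) * M ^ 2 := by
      have f1 : M * ‖ep‖ ≤ M ^ 2 := by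
        rw [pow_two]
        exact mul_le_mul_of_nonneg_left hPM hM0
      have f2 : r i * (M * ‖ep‖) ≤ r i * M ^ 2 :=
        mul_le_mul_of_nonneg_left f1 (hr0 i).le
      linarith [final2, f2]
    have final4 : ‖ep‖ ^ 2 ≤ (β i / 2 + r i) / (θ i / 2 + β i / 2 + r i) * M ^ 2 := by
      rw [div_mul_eq_mul_div, le_div_iff₀ (hA0 i)]
      linarith [final3]
    have hres : ‖ep‖ ≤ ρf i * M := by
      have e5 : ρf i * M
          = Real.sqrt ((β i / 2 + r i) / (θ i / 2 + β i / 2 + r i) * M ^ 2) := by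
        simp only [hρfdef]
        rw [Real.sqrt_mul (div_nonneg (by linarith [hβ i, hr0 i]) (hA0 i).le),
          Real.sqrt_sq hM0]
      rw [e5, ← Real.sqrt_sq (norm_nonneg ep)]
      exact Real.sqrt_le_sqrt final4
    exact le_trans hres (mul_le_mul_of_nonneg_right (hρfle i) hM0)
  -- norm of initial errors
  have hne' := hne
  set B : ℝ := Finset.univ.sup' hne (fun i => ‖x 0 i - xstar i‖) with hBdef
  have hB0 : 0 ≤ B :=
    le_trans (norm_nonneg _) (Finset.le_sup' (fun i => ‖x 0 i - xstar i‖)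
      (Finset.mem_univ (⟨0, n.succ_pos⟩ : Fin (n+1))))
  have hBinit : ∀ i, ‖x 0 i - xstar i‖ ≤ B :=
    fun i => Finset.le_sup' (fun i => ‖x 0 i - xstar i‖) (Finset.mem_univ i)
  clear_value B
  -- boundedness of all iterates
  have bdd : ∀ k, ∀ i, ‖x k i - xstar i‖ ≤ B := by
    intro k
    induction k using Nat.strong_induction_on with
    | _ k ih =>
      match k with
      | 0 => exact hBinit
      | Nat.succ k =>
        intro i
        by_cases hk : k ∈ K i
        · have hc := contr i k hk B hB0 (ih k (Nat.lt_succ_self k) i)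
            (fun j => ih (s i j k) (Nat.lt_succ_of_le (hsle i j k hk)) j)
          calc ‖x (k+1) i - xstar i‖ ≤ ρ * B := hc
            _ ≤ 1 * B := mul_le_mul_of_nonneg_right hρlt.le hB0
            _ = B := one_mul B
        · rw [hnoupdate i k hk]
          exact ih k (Nat.lt_succ_self k) i
  -- geometric decrease of the error levels
  have lvl : ∀ ℓ : ℕ, ∃ T : ℕ, ∀ k, T ≤ k → ∀ i, ‖x k i - xstar i‖ ≤ ρ ^ ℓ * B := by
    intro ℓ
    induction ℓ with
    | zero => exact ⟨0, fun k _ i => by simpa using bdd k i⟩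
    | succ ℓ ihl =>
      obtain ⟨T, hT⟩ := ihl
      have hlvl0 : 0 ≤ ρ ^ ℓ * B := mul_nonneg (pow_nonneg hρ0 ℓ) hB0
      have hstep : ρ * (ρ ^ ℓ * B) = ρ ^ (ℓ + 1) * B := by rw [pow_succ]; ring
      have hmono : ρ ^ (ℓ + 1) * B ≤ ρ ^ ℓ * B := by
        rw [← hstep]
        calc ρ * (ρ ^ ℓ * B) ≤ 1 * (ρ ^ ℓ * B) :=
              mul_le_mul_of_nonneg_right hρlt.le hlvl0
          _ = ρ ^ ℓ * B := one_mul _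
      choose N hN using fun i j => hstot i j T
      set N' : ℕ := max T (Finset.univ.sup fun i => Finset.univ.sup fun j => N i j) with hN'def
      have hNle : ∀ i j, N i j ≤ N' := by
        intro i j
        refine le_trans ?_ (le_max_right _ _)
        exact le_trans (Finset.le_sup (Finset.mem_univ j))
          (Finset.le_sup (f := fun i => Finset.univ.sup fun j => N i j) (Finset.mem_univ i))
      have hTN : T ≤ N' := le_max_left _ _
      have hnode : ∀ i, ∃ Ti, ∀ k, Ti ≤ k → ‖x k i - xstar i‖ ≤ ρ ^ (ℓ+1) * B := by
        intro i
        obtain ⟨ki, hki_mem, hki_gt⟩ := (hKinf i).exists_gt N'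
        refine ⟨ki + 1, ?_⟩
        intro k hk
        induction k, hk using Nat.le_induction with
        | base =>
          have hown : ‖x ki i - xstar i‖ ≤ ρ ^ ℓ * B :=
            hT ki (le_trans hTN hki_gt.le) i
          have hnb : ∀ j, ‖x (s i j ki) j - xstar j‖ ≤ ρ ^ ℓ * B := fun j =>
            hT _ (hN i j ki hki_mem (le_trans (hNle i j) hki_gt.le)) j
          have := contr i ki hki_mem (ρ ^ ℓ * B) hlvl0 hown hnb
          rwa [hstep] at this
        | succ k hk ihk =>
          by_cases hkK : k ∈ K i
          · have hown : ‖x k i - xstar i‖ ≤ ρ ^ ℓ * B := le_trans ihk hmono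
            have hnb : ∀ j, ‖x (s i j k) j - xstar j‖ ≤ ρ ^ ℓ * B := fun j =>
              hT _ (hN i j k hkK (le_trans (hNle i j) (le_trans hki_gt.le (by omega)))) j
            have := contr i k hkK (ρ ^ ℓ * B) hlvl0 hown hnb
            rwa [hstep] at this
          · rw [hnoupdate i k hkK]
            exact ihk
      choose Ti hTi using hnode
      exact ⟨Finset.univ.sup Ti, fun k hk i =>
        hTi i k (le_trans (Finset.le_sup (Finset.mem_univ i)) hk)⟩
  -- conclude convergence
  intro i
  rw [Metric.tendsto_atTop]
  intro ε hε
  have htend : Filter.Tendsto (fun ℓ : ℕ => ρ ^ ℓ * B) Filter.atTop (nhds 0) := by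
    have := (tendsto_pow_atTop_nhds_zero_of_lt_one hρ0 hρlt).mul_const B
    simpa using this
  obtain ⟨ℓ, hℓ⟩ := (htend.eventually (gt_mem_nhds hε)).exists
  obtain ⟨T, hT⟩ := lvl ℓ
  refine ⟨T, fun k hk => ?_⟩
  rw [dist_eq_norm]
  exact lt_of_le_of_lt (hT k hk i) hℓ
end

section
/- (Per-iteration inequality for stochastic models, core of Theorem 3.) Let ι be a finite nonempty index type with a distinguished element i₀, and let ŵ : ι → ℝ satisfy ŵ_j ≥ 0 for all j and Σ_j ŵ_j = 1. Let γ > 0 and θ > 0. Let f, h, m : ℝ^d → ℝ with m and h convex, and assume φ := f + h is θ-strongly convex. Fix x̄ ∈ ℝ^d, let z : ι → ℝ^d with z_{i₀} = x̄, and let x* : ι → ℝ^d. Suppose x⁺, g⁺ ∈ ℝ^d satisfy: g⁺ is a subgradient of m + h at x⁺ and x⁺ = Σ_j ŵ_j z_j − γ g⁺. Suppose g* ∈ ℝ^d is a subgradient of φ at x*_{i₀} and x*_{i₀} = Σ_j ŵ_j x*_j − γ g*. Set Δ₁ := γ·( m(x*_{i₀}) − f(x*_{i₀}) ) and Δ₂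 := γ·( f(x⁺) − m(x⁺) ). Then ‖x⁺ − x*_{i₀}‖² ≤ (1/(1 + γθ)) · ( Σ_j ŵ_j ‖z_j − x*_j‖² + 2( Δ₁ + Δ₂ − (ŵ_{i₀}/2)‖x⁺ − x̄‖² ) ). -/
open scoped RealInnerProductSpace

lemma combo_norm {E : Type*} [NormedAddCommGroup E] [InnerProductSpace ℝ E]
    (a b : E) (t : ℝ) :
    ‖(1 - t) • a + t • b‖ ^ 2
      = (1 - t) * ‖a‖ ^ 2 + t * ‖b‖ ^ 2 - t * (1 - t) * ‖b - a‖ ^ 2 := by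
  simp only [← real_inner_self_eq_norm_sq]
  simp only [inner_add_add_self, inner_sub_sub_self, real_inner_smul_left,
    real_inner_smul_right, real_inner_comm a b]
  ring

lemma strong_subgrad {E : Type*} [NormedAddCommGroup E] [InnerProductSpace ℝ E]
    (θ : ℝ) (hθ : 0 < θ) (φ : E → ℝ)
    (hsc : ConvexOn ℝ Set.univ (fun x => φ x - θ / 2 * ‖x‖ ^ 2))
    (s g : E) (hg : ∀ y, φ y ≥ φ s + ⟪g, y - s⟫) (y : E) :
    φ y ≥ φ s + ⟪g, y - s⟫ + θ / 2 * ‖y - s‖ ^ 2 := by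
  have key : ∀ t : ℝ, 0 < t → t < 1 →
      φ s + ⟪g, y - s⟫ + θ / 2 * (1 - t) * ‖y - s‖ ^ 2 ≤ φ y := by
    intro t ht0 ht1
    have hconv := hsc.2 (Set.mem_univ s) (Set.mem_univ y)
      (by linarith : (0:ℝ) ≤ 1 - t) ht0.le (by ring)
    simp only [smul_eq_mul] at hconv
    have hsub := hg ((1 - t) • s + t • y)
    have hpt : (1 - t) • s + t • y - s = t • (y - s) := by
      module
    rw [hpt, real_inner_smul_right] at hsub
    have hnorm := combo_norm s y t
    have hstep : t * (φ s + ⟪g, y - s⟫ + θ / 2 * (1 - t) * ‖y - s‖ ^ 2) ≤ t * φ y := by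
      nlinarith [hsub, hconv, hnorm]
    exact le_of_mul_le_mul_left hstep ht0
  set C := ‖y - s‖ ^ 2 with hC
  clear_value C
  have hC0 : 0 ≤ C := by rw [hC]; positivity
  by_contra hlt
  push_neg at hlt
  set δ := φ s + ⟪g, y - s⟫ + θ / 2 * C - φ y with hδ
  clear_value δ
  have hδ0 : 0 < δ := by simp only [hδ]; linarith
  set K := θ / 2 * C with hK
  clear_value K
  have hK0 : 0 ≤ K := by rw [hK, hC]; positivity
  have h2K : (0:ℝ) < 2 * (K + 1) := by nlinarith
  set t := min (1/2 : ℝ) (δ / (2 * (K + 1))) with ht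
  clear_value t
  have ht0 : 0 < t := by rw [ht]; exact lt_min (by norm_num) (div_pos hδ0 h2K)
  have ht1 : t < 1 := by rw [ht]; exact lt_of_le_of_lt (min_le_left _ _) (by norm_num)
  have ht2 : t ≤ δ / (2 * (K + 1)) := by rw [ht]; exact min_le_right _ _
  have hkey := key t ht0 ht1
  have hKt : K * t ≤ δ / 2 := by
    have h1 : K * t ≤ K * (δ / (2 * (K + 1))) := by
      exact mul_le_mul_of_nonneg_left ht2 hK0
    have h2 : K * (δ / (2 * (K + 1))) ≤ δ / 2 := by
      rw [mul_div_assoc', div_le_div_iff₀ h2K (by norm_num)]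
      nlinarith
    linarith
  have : θ / 2 * (1 - t) * C = K - K * t := by rw [hK]; ring
  rw [this] at hkey
  linarith

set_option maxHeartbeats 1000000 in
/-- Per-iteration inequality for stochastic models (core of Theorem 3). -/
theorem stmt_10 {d : ℕ} (hd : 1 ≤ d)
    {ι : Type*} [Fintype ι] [Nonempty ι] (i₀ : ι)
    (w : ι → ℝ) (hw : ∀ j, 0 ≤ w j) (hw1 : ∑ j, w j = 1)
    (γ θ : ℝ) (hγ : 0 < γ) (hθ : 0 < θ)
    (f h m : EuclideanSpace ℝ (Fin d) → ℝ)
    (hmconv : ConvexOn ℝ Set.univ m) (hhconv : ConvexOn ℝ Set.univ h)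
    (φ : EuclideanSpace ℝ (Fin d) → ℝ) (hφ : ∀ y, φ y = f y + h y)
    (hsc : ConvexOn ℝ Set.univ (fun x => φ x - θ / 2 * ‖x‖ ^ 2))
    (xb : EuclideanSpace ℝ (Fin d))
    (z : ι → EuclideanSpace ℝ (Fin d)) (hz : z i₀ = xb)
    (xstar : ι → EuclideanSpace ℝ (Fin d))
    (xp gp : EuclideanSpace ℝ (Fin d))
    (hgp : ∀ y, m y + h y ≥ m xp + h xp + ⟪gp, y - xp⟫)
    (hxp : xp = ∑ j, w j • z j - γ • gp)
    (gs : EuclideanSpace ℝ (Fin d))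
    (hgs : ∀ y, φ y ≥ φ (xstar i₀) + ⟪gs, y - xstar i₀⟫)
    (hxs : xstar i₀ = ∑ j, w j • xstar j - γ • gs)
    (Δ₁ Δ₂ : ℝ)
    (hΔ₁ : Δ₁ = γ * (m (xstar i₀) - f (xstar i₀)))
    (hΔ₂ : Δ₂ = γ * (f xp - m xp)) :
    ‖xp - xstar i₀‖ ^ 2 ≤ (1 / (1 + γ * θ)) *
      ((∑ j, w j * ‖z j - xstar j‖ ^ 2)
        + 2 * (Δ₁ + Δ₂ - w i₀ / 2 * ‖xp - xb‖ ^ 2)) := by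
  have hpos : (0:ℝ) < 1 + γ * θ := by nlinarith
  set s := xstar i₀ with hs
  set zb := ∑ j, w j • z j with hzb
  set sb := ∑ j, w j • xstar j with hsb
  set c := xp - s with hc
  -- subgradient inequalities
  have hA : m s + h s ≥ m xp + h xp + ⟪gp, s - xp⟫ := hgp s
  have hB : φ xp ≥ φ s + ⟪gs, xp - s⟫ + θ / 2 * ‖xp - s‖ ^ 2 :=
    strong_subgrad θ hθ φ hsc s gs hgs xp
  -- γ-scaled gradients
  have hgp' : γ • gp = zb - xp := by rw [hxp]; abel
  have hgs' : γ • gs = sb - s := by rw [hxs]; abel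
  have e1 : γ * ⟪gp, s - xp⟫ = ⟪zb - xp, s - xp⟫ := by
    rw [← real_inner_smul_left, hgp']
  have e2 : γ * ⟪gs, xp - s⟫ = ⟪sb - s, xp - s⟫ := by
    rw [← real_inner_smul_left, hgs']
  have e3 : ⟪zb - xp, s - xp⟫ + ⟪sb - s, xp - s⟫
      = ‖c‖ ^ 2 - ⟪zb - sb, c⟫ := by
    rw [← real_inner_self_eq_norm_sq,
      show zb - xp = (zb - sb) - c + (sb - s) from by rw [hc]; abel,
      show s - xp = -c from by rw [hc]; abel,
      show xp - s = c from by rw [hc]]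
    rw [inner_neg_right, inner_add_left, inner_sub_left]
    ring
  -- sum identities
  have e4 : zb - sb = ∑ j, w j • (z j - xstar j) := by
    rw [hzb, hsb, ← Finset.sum_sub_distrib]
    simp [smul_sub]
  have e5 : ⟪zb - sb, c⟫ = ∑ j, w j * ⟪z j - xstar j, c⟫ := by
    rw [e4, sum_inner]
    exact Finset.sum_congr rfl fun j _ => real_inner_smul_left _ _ _
  have e6 : ∑ j, w j * ⟪z j - xstar j, c⟫
      = (∑ j, w j * ‖z j - xstar j‖ ^ 2) / 2 + ‖c‖ ^ 2 / 2
        - ∑ j, w j * (‖(z j - xstar j) - c‖ ^ 2 / 2) := by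
    have hterm : ∀ j, w j * ⟪z j - xstar j, c⟫
        = w j * ‖z j - xstar j‖ ^ 2 / 2 + w j * ‖c‖ ^ 2 / 2
          - w j * (‖(z j - xstar j) - c‖ ^ 2 / 2) := by
      intro j
      have hn := norm_sub_sq_real (z j - xstar j) c
      linear_combination (w j / 2) * hn
    rw [Finset.sum_congr rfl fun j _ => hterm j]
    rw [Finset.sum_sub_distrib, Finset.sum_add_distrib]
    have : ∑ j, w j * ‖c‖ ^ 2 / 2 = (∑ j, w j) * (‖c‖ ^ 2 / 2) := by
      rw [Finset.sum_mul]
      exact Finset.sum_congr rfl fun j _ => by ring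
    rw [this, hw1]
    have : ∑ j, w j * ‖z j - xstar j‖ ^ 2 / 2
        = (∑ j, w j * ‖z j - xstar j‖ ^ 2) / 2 := by
      rw [Finset.sum_div]
    rw [this]
    ring
  have e7 : w i₀ * (‖xp - xb‖ ^ 2 / 2) ≤ ∑ j, w j * (‖(z j - xstar j) - c‖ ^ 2 / 2) := by
    have hi : (z i₀ - xstar i₀) - c = xb - xp := by
      rw [hc, hs, hz]; abel
    have : w i₀ * (‖(z i₀ - xstar i₀) - c‖ ^ 2 / 2)
        = w i₀ * (‖xp - xb‖ ^ 2 / 2) := by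
      rw [hi, norm_sub_rev]
    rw [← this]
    exact Finset.single_le_sum (f := fun j => w j * (‖(z j - xstar j) - c‖ ^ 2 / 2))
      (fun j _ => mul_nonneg (hw j) (by positivity)) (Finset.mem_univ i₀)
  -- scale subgradient inequalities by γ
  have hA' : γ * (m xp + h xp + ⟪gp, s - xp⟫) ≤ γ * (m s + h s) :=
    mul_le_mul_of_nonneg_left hA hγ.le
  have hB' : γ * (φ s + ⟪gs, xp - s⟫ + θ / 2 * ‖xp - s‖ ^ 2) ≤ γ * φ xp :=
    mul_le_mul_of_nonneg_left hB hγ.le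
  rw [hφ, hφ] at hB'
  have hcn : ‖xp - s‖ ^ 2 = ‖c‖ ^ 2 := by rw [hc]
  rw [hcn] at hB'
  -- combine
  have hmain : (1 + γ * θ) * ‖c‖ ^ 2
      ≤ (∑ j, w j * ‖z j - xstar j‖ ^ 2)
        + 2 * (Δ₁ + Δ₂ - w i₀ / 2 * ‖xp - xb‖ ^ 2) := by
    linarith [hA', hB', e1, e2, e3, e5, e6, e7, hΔ₁, hΔ₂]
  have hgoal := mul_le_mul_of_nonneg_left hmain
    (le_of_lt (by positivity : (0:ℝ) < 1 / (1 + γ * θ)))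
  rw [← mul_assoc, one_div, inv_mul_cancel₀ hpos.ne', one_mul] at hgoal
  rw [one_div]
  exact hgoal
end

section
/- (Delayed linear recursion with additive error.) Let ρ ∈ [0,1), c ≥ 0, τ ∈ ℕ, and let a : ℕ → ℝ be a sequence with a(k) ≥ 0 for all k. Suppose that for every k ≥ τ + 1, a(k) ≤ ρ · max_{k−τ−1 ≤ ℓ ≤ k−1} a(ℓ) + c. Then for every k ∈ ℕ, a(k) ≤ ρ^{⌊k/(τ+1)⌋} · ( max_{0 ≤ ℓ ≤ τ} a(ℓ) ) + c/(1 − ρ), where ⌊k/(τ+1)⌋ denotes natural-number division. -/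
/-- Delayed linear recursion with additive error. -/
theorem stmt_11 (ρ c : ℝ) (hρ0 : 0 ≤ ρ) (hρ1 : ρ < 1) (hc : 0 ≤ c)
    (τ : ℕ) (a : ℕ → ℝ) (ha : ∀ k, 0 ≤ a k)
    (hrec : ∀ k, τ + 1 ≤ k →
      a k ≤ ρ * (Finset.Icc (k - τ - 1) (k - 1)).sup'
        (Finset.nonempty_Icc.mpr (by omega)) a + c) :
    ∀ k, a k ≤ ρ ^ (k / (τ + 1)) *
        (Finset.Icc 0 τ).sup' (Finset.nonempty_Icc.mpr (Nat.zero_le τ)) a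
      + c / (1 - ρ) := by
  set M := (Finset.Icc 0 τ).sup' (Finset.nonempty_Icc.mpr (Nat.zero_le τ)) a with hMdef
  have hM0 : 0 ≤ M :=
    le_trans (ha 0) (Finset.le_sup' a (Finset.mem_Icc.mpr ⟨le_rfl, Nat.zero_le τ⟩))
  have hcd : 0 ≤ c / (1 - ρ) := div_nonneg hc (by linarith)
  intro k
  induction k using Nat.strong_induction_on with
  | _ k ih =>
    by_cases hk : k ≤ τ
    · have h0 : k / (τ + 1) = 0 := Nat.div_eq_of_lt (by omega)
      rw [h0, pow_zero, one_mul]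
      have := Finset.le_sup' a (Finset.mem_Icc.mpr ⟨Nat.zero_le k, hk⟩)
      linarith
    · push_neg at hk
      have hk' : τ + 1 ≤ k := hk
      have hq : 1 ≤ k / (τ + 1) := (Nat.one_le_div_iff (by omega)).mpr hk'
      have hsub : k / (τ + 1) = (k - (τ + 1)) / (τ + 1) + 1 :=
        Nat.div_eq_sub_div (by omega) hk'
      have hsup : (Finset.Icc (k - τ - 1) (k - 1)).sup'
          (Finset.nonempty_Icc.mpr (by omega)) a
          ≤ ρ ^ (k / (τ + 1) - 1) * M + c / (1 - ρ) := by
        apply Finset.sup'_le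
        intro ℓ hℓ
        rw [Finset.mem_Icc] at hℓ
        have hlt : ℓ < k := by omega
        have hih := ih ℓ hlt
        have hdiv : k / (τ + 1) - 1 ≤ ℓ / (τ + 1) := by
          have h1 : (k - (τ + 1)) / (τ + 1) ≤ ℓ / (τ + 1) :=
            Nat.div_le_div_right (by omega)
          omega
        have hpow : ρ ^ (ℓ / (τ + 1)) ≤ ρ ^ (k / (τ + 1) - 1) :=
          pow_le_pow_of_le_one hρ0 hρ1.le hdiv
        have := mul_le_mul_of_nonneg_right hpow hM0
        linarith
      have hstep := hrec k hk'
      have hmul := mul_le_mul_of_nonneg_left hsup hρ0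
      have hρpow : ρ * ρ ^ (k / (τ + 1) - 1) = ρ ^ (k / (τ + 1)) := by
        rw [← pow_succ']
        congr 1
        omega
      have hgeo : ρ * (c / (1 - ρ)) + c = c / (1 - ρ) := by
        have h1 : (1 : ℝ) - ρ ≠ 0 := by linarith
        field_simp
        ring
      nlinarith [hstep, hmul]
end

section
/- (Interval contraction under total asynchrony.) Let ρ ∈ [0,1), let b : ℕ → ℝ satisfy b(k) ≥ 0 for all k, and let a : ℕ → ℕ be strictly increasing with a(0) = 0. Suppose that for every t ∈ ℕ and every k with a(t+1) ≤ k < a(t+2), b(k) ≤ ρ · max_{a(t) ≤ ℓ < a(t+1)} b(ℓ). Then b(k) → 0 as k → ∞. -/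
/-- Interval contraction under total asynchrony. -/
theorem stmt_12 (ρ : ℝ) (hρ0 : 0 ≤ ρ) (hρ1 : ρ < 1)
    (b : ℕ → ℝ) (hb : ∀ k, 0 ≤ b k)
    (a : ℕ → ℕ) (ha : StrictMono a) (ha0 : a 0 = 0)
    (hrec : ∀ t : ℕ, ∀ k : ℕ, a (t + 1) ≤ k → k < a (t + 2) →
      b k ≤ ρ * (Finset.Ico (a t) (a (t + 1))).sup'
        (Finset.nonempty_Ico.mpr (ha (Nat.lt_succ_self t))) b) :
    Filter.Tendsto b Filter.atTop (nhds 0) := by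
  set M : ℕ → ℝ := fun t => (Finset.Ico (a t) (a (t + 1))).sup'
      (Finset.nonempty_Ico.mpr (ha (Nat.lt_succ_self t))) b with hM
  have hM0 : ∀ t, 0 ≤ M t := by
    intro t
    obtain ⟨x, hx⟩ := Finset.nonempty_Ico.mpr (ha (Nat.lt_succ_self t))
    exact le_trans (hb x) (Finset.le_sup' b hx)
  have hstep : ∀ t, M (t + 1) ≤ ρ * M t := by
    intro t
    apply Finset.sup'_le
    intro k hk
    rw [Finset.mem_Ico] at hk
    exact hrec t k hk.1 hk.2
  have hMt : ∀ t, M t ≤ ρ ^ t * M 0 := by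
    intro t
    induction t with
    | zero => simp
    | succ n ih =>
      calc M (n + 1) ≤ ρ * M n := hstep n
        _ ≤ ρ * (ρ ^ n * M 0) := mul_le_mul_of_nonneg_left ih hρ0
        _ = ρ ^ (n + 1) * M 0 := by ring
  have han : ∀ n, n ≤ a n := fun n => ha.le_apply
  -- existence of interval containing k
  have hfind : ∀ k : ℕ, ∃ t, a t ≤ k ∧ k < a (t + 1) := by
    intro k
    set P : ℕ → Prop := fun t => a t ≤ k with hP
    have hP0 : P 0 := by simp [hP, ha0]
    set t := Nat.findGreatest P k with ht
    refine ⟨t, Nat.findGreatest_spec (Nat.zero_le k) hP0, ?_⟩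
    by_contra h
    push_neg at h
    have htk : t + 1 ≤ k := le_trans (le_trans (han (t + 1)) h) (le_refl k)
    exact Nat.findGreatest_is_greatest (Nat.lt_succ_self t) htk h
  rw [Metric.tendsto_atTop]
  intro ε hε
  have htend : Filter.Tendsto (fun t => ρ ^ t * M 0) Filter.atTop (nhds 0) := by
    simpa using (tendsto_pow_atTop_nhds_zero_of_lt_one hρ0 hρ1).mul_const (M 0)
  obtain ⟨T, hT⟩ := (Metric.tendsto_atTop.mp htend) ε hε
  refine ⟨a T, fun k hk => ?_⟩
  obtain ⟨t, ht1, ht2⟩ := hfind k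
  have hTt : T ≤ t := by
    by_contra h
    push_neg at h
    have : a (t + 1) ≤ a T := ha.monotone h
    omega
  have hbk : b k ≤ M t := Finset.le_sup' b (Finset.mem_Ico.mpr ⟨ht1, ht2⟩)
  have h1 : b k ≤ ρ ^ T * M 0 := by
    calc b k ≤ M t := hbk
      _ ≤ ρ ^ t * M 0 := hMt t
      _ ≤ ρ ^ T * M 0 :=
        mul_le_mul_of_nonneg_right (pow_le_pow_of_le_one hρ0 hρ1.le hTt) (hM0 0)
  have h2 := hT T le_rfl
  rw [Real.dist_eq] at h2 ⊢
  simp only [sub_zero] at h2 ⊢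
  rw [abs_of_nonneg (hb k)]
  calc b k ≤ ρ ^ T * M 0 := h1
    _ ≤ |ρ ^ T * M 0| := le_abs_self _
    _ < ε := h2
end

section
/- (Deterministic inequality behind the stochastic model sandwich of Lemma 2.) Let f : ℝ^d → ℝ be convex and differentiable with L-Lipschitz gradient (L > 0). Let x̄ ∈ ℝ^d, F̂ ∈ ℝ, G ∈ ℝ^d, and let m : ℝ^d → ℝ satisfy m(y) ≥ F̂ + ⟪G, y − x̄⟫ for all y ∈ ℝ^d. Then for every x ∈ ℝ^d, m(x) + L‖x − x̄‖² − f(x) ≥ ( F̂ − f(x̄) ) − (1/(2L))‖G − ∇f(x̄)‖². -/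
/-!
By the descent lemma, `f x ≤ f x̄ + ⟪∇f x̄, x - x̄⟫ + (L/2)‖x - x̄‖²`. Subtracting this from the
lower bound on `m x` leaves `⟪G - ∇f x̄, x - x̄⟫ + (L/2)‖x - x̄‖²`, a quadratic in `x - x̄` whose
minimum is `-‖G - ∇f x̄‖² / (2L)`.
-/

open scoped RealInnerProductSpace NNReal

variable {E : Type*} [NormedAddCommGroup E] [InnerProductSpace ℝ E]

theorem neg_norm_sq_div_le_inner_add_mul_norm_sq {L : ℝ} (hL : 0 < L) (v u : E) :
    -(‖v‖ ^ 2 / (2 * L)) ≤ ⟪v, u⟫ + L / 2 * ‖u‖ ^ 2 := by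
  have h : 0 ≤ ‖v + L • u‖ ^ 2 / (2 * L) := by positivity
  rw [norm_add_sq_real, inner_smul_right, norm_smul, Real.norm_of_nonneg hL.le] at h
  have : (‖v‖ ^ 2 + 2 * (L * ⟪v, u⟫) + (L * ‖u‖) ^ 2) / (2 * L)
      = ‖v‖ ^ 2 / (2 * L) + ⟪v, u⟫ + L / 2 * ‖u‖ ^ 2 := by
    field_simp
  linarith

section Gradient

variable [CompleteSpace E] {f : E → ℝ}

theorem HasGradientAt.hasDerivAt_comp_add_smul {g x u : E} {t : ℝ}
    (hf : HasGradientAt f g (x + t • u)) :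
    HasDerivAt (fun s : ℝ => f (x + s • u)) ⟪g, u⟫ t := by
  have hline : HasDerivAt (fun s : ℝ => x + s • u) u t := by
    simpa using ((hasDerivAt_id t).smul_const u).const_add x
  simpa [Function.comp_def] using hf.hasFDerivAt.comp_hasDerivAt t hline

theorem le_add_inner_gradient_add_half_mul_sq {K : ℝ≥0} (hf : Differentiable ℝ f)
    (hK : LipschitzWith K (gradient f)) (x y : E) :
    f y ≤ f x + ⟪gradient f x, y - x⟫ + K / 2 * ‖y - x‖ ^ 2 := by
  set u := y - x
  let φ : ℝ → ℝ := fun t => f (x + t • u) - t * ⟪gradient f x, u⟫ - K / 2 * t ^ 2 * ‖u‖ ^ 2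
  have hφ : ∀ t, HasDerivAt φ
      (⟪gradient f (x + t • u) - gradient f x, u⟫ - K * t * ‖u‖ ^ 2) t := fun t => by
    have h := (((hf (x + t • u)).hasGradientAt.hasDerivAt_comp_add_smul).sub
      ((hasDerivAt_id t).mul_const ⟪gradient f x, u⟫)).sub
      (((hasDerivAt_pow 2 t).const_mul (K / 2 : ℝ)).mul_const (‖u‖ ^ 2))
    refine h.congr_deriv ?_
    rw [inner_sub_left]
    ring
  have hφ_nonpos : ∀ t ∈ interior (Set.Ici (0 : ℝ)),
      ⟪gradient f (x + t • u) - gradient f x, u⟫ - K * t * ‖u‖ ^ 2 ≤ 0 := by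
    intro t ht
    rw [interior_Ici, Set.mem_Ioi] at ht
    rw [sub_nonpos]
    have hlip : ‖gradient f (x + t • u) - gradient f x‖ ≤ K * (t * ‖u‖) := by
      simpa [← dist_eq_norm, norm_smul, abs_of_pos ht] using hK.dist_le_mul (x + t • u) x
    calc ⟪gradient f (x + t • u) - gradient f x, u⟫
        ≤ ‖gradient f (x + t • u) - gradient f x‖ * ‖u‖ := real_inner_le_norm _ _
      _ ≤ K * (t * ‖u‖) * ‖u‖ := by gcongr
      _ = K * t * ‖u‖ ^ 2 := by ring
  have hanti : AntitoneOn φ (Set.Ici 0) :=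
    antitoneOn_of_hasDerivWithinAt_nonpos (convex_Ici 0)
      (fun t _ => (hφ t).continuousAt.continuousWithinAt)
      (fun t _ => (hφ t).hasDerivWithinAt) hφ_nonpos
  have h01 : φ 1 ≤ φ 0 := hanti Set.self_mem_Ici (Set.mem_Ici.mpr zero_le_one) zero_le_one
  simp only [φ, one_smul, zero_smul, add_zero, one_mul, one_pow, zero_mul, sub_zero, ne_eq,
    OfNat.ofNat_ne_zero, not_false_eq_true, zero_pow, mul_zero] at h01
  rw [show x + u = y from add_sub_cancel x y] at h01
  linarith

end Gradient

theorem stmt_13_general {d : ℕ}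
    (f : EuclideanSpace ℝ (Fin d) → ℝ) (L : ℝ) (hL : 0 < L)
    (hfdiff : Differentiable ℝ f)
    (hflip : LipschitzWith L.toNNReal (fun x => gradient f x))
    (xb : EuclideanSpace ℝ (Fin d)) (Fhat : ℝ) (G : EuclideanSpace ℝ (Fin d))
    (m : EuclideanSpace ℝ (Fin d) → ℝ)
    (hm : ∀ y, m y ≥ Fhat + ⟪G, y - xb⟫) :
    ∀ x, m x + L * ‖x - xb‖ ^ 2 - f x ≥
      (Fhat - f xb) - (1 / (2 * L)) * ‖G - gradient f xb‖ ^ 2 := by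
  intro x
  have hdescent := le_add_inner_gradient_add_half_mul_sq hfdiff hflip xb x
  rw [Real.coe_toNNReal L hL.le] at hdescent
  have hquad := neg_norm_sq_div_le_inner_add_mul_norm_sq hL (G - gradient f xb) (x - xb)
  rw [inner_sub_left] at hquad
  have hmx := hm x
  have hsq : 0 ≤ L * ‖x - xb‖ ^ 2 := by positivity
  have : 1 / (2 * L) * ‖G - gradient f xb‖ ^ 2 = ‖G - gradient f xb‖ ^ 2 / (2 * L) := by ring
  linarith

/-- Deterministic inequality behind the stochastic model sandwich of Lemma 2. -/
theorem stmt_13 {d : ℕ} (hd : 1 ≤ d)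
    (f : EuclideanSpace ℝ (Fin d) → ℝ) (L : ℝ) (hL : 0 < L)
    (hfconv : ConvexOn ℝ Set.univ f)
    (hfdiff : Differentiable ℝ f)
    (hflip : LipschitzWith L.toNNReal (fun x => gradient f x))
    (xb : EuclideanSpace ℝ (Fin d)) (Fhat : ℝ) (G : EuclideanSpace ℝ (Fin d))
    (m : EuclideanSpace ℝ (Fin d) → ℝ)
    (hm : ∀ y, m y ≥ Fhat + ⟪G, y - xb⟫) :
    ∀ x, m x + L * ‖x - xb‖ ^ 2 - f x ≥
      (Fhat - f xb) - (1 / (2 * L)) * ‖G - gradient f xb‖ ^ 2 :=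
  stmt_13_general f L hL hfdiff hflip xb Fhat G m hm
end
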